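/- arXiv:2102.04281 — 4 statements merged into one kernel-verified Lean document; each statement's English description precedes it below -/
import Mathlib

section
/- In a strict ω-category, the relation of ω-equivalence on parallel n-cells is reflexive, symmetric, and transitive; moreover it is compatible with compositions: if a ∼ c and b ∼ d for m-composable pairs (a,b) and (c,d) of n-cells, then b *_m a ∼ d *_m c. -/
/-- A strict ω-category, in a single-sorted presentation: a set of cells with a dimension
function, `n`-source and `n`-target operators (`d false n` is the `n`-source, `d true n`
the `n`-target), identity cells and partially defined compositions (`comp m g f` is the
composite `g *ₘ f`, meaningful when the `m`-source of `g` equals the `m`-target of `f`),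
subject to the strict globularity, unit, associativity and interchange axioms. -/
structure OmegaCat where
  Cell : Type*
  dim : Cell → ℕ
  d : Bool → ℕ → Cell → Cell
  ident : Cell → Cell
  comp : ℕ → Cell → Cell → Cell
  dim_d : ∀ α n x, dim (d α n x) = min n (dim x)
  d_eq_self : ∀ α n x, dim x ≤ n → d α n x = x
  d_d : ∀ α β m n x, m ≤ n → d α m (d β n x) = d α m x
  dim_ident : ∀ x, dim (ident x) = dim x + 1
  d_ident : ∀ α x, d α (dim x) (ident x) = x
  dim_comp : ∀ m g f, dim g = dim f → dim (comp m g f) = dim f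
  d_comp_src : ∀ m g f, dim g = dim f → m < dim f → d false m g = d true m f →
      d false m (comp m g f) = d false m f
  d_comp_tgt : ∀ m g f, dim g = dim f → m < dim f → d false m g = d true m f →
      d true m (comp m g f) = d true m g
  d_comp_higher : ∀ α k m g f, dim g = dim f → m < k → k < dim f →
      d false m g = d true m f →
      d α k (comp m g f) = comp m (d α k g) (d α k f)
  comp_assoc : ∀ m e g f, dim e = dim f → dim g = dim f → m < dim f →
      d false m g = d true m f → d false m e = d true m g →
      comp m e (comp m g f) = comp m (comp m e g) f
  ident_comp : ∀ f, 0 < dim f → comp (dim f - 1) (ident (d true (dim f - 1) f)) f = f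
  comp_ident : ∀ f, 0 < dim f → comp (dim f - 1) f (ident (d false (dim f - 1) f)) = f
  ident_comp_lower : ∀ m f, m < dim f →
      comp m (ident^[dim f - m] (d true m f)) f = f ∧
      comp m f (ident^[dim f - m] (d false m f)) = f
  ident_comp_ident : ∀ m g f, dim g = dim f → m < dim f → d false m g = d true m f →
      ident (comp m g f) = comp m (ident g) (ident f)
  exchange : ∀ k m a b c e, k < m → m < dim a →
      dim b = dim a → dim c = dim a → dim e = dim a →
      d false m a = d true m b → d false m c = d true m e →
      d false k a = d true k c → d false k b = d true k e →
      comp k (comp m a b) (comp m c e) = comp m (comp k a c) (comp k b e)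

namespace OmegaCat

variable (C : OmegaCat)

/-- Two cells are parallel when they have the same dimension and the same
lower-dimensional sources and targets. -/
def Parallel (x y : C.Cell) : Prop :=
  C.dim x = C.dim y ∧
    ∀ k, k < C.dim x → C.d false k x = C.d false k y ∧ C.d true k x = C.d true k y

/-- `W` is an invertibility system when every cell `c` in `W` has positive dimension and
admits a candidate weak inverse `c'` together with cells `u : 1_{src c} → c' * c` and
`u' : 1_{tgt c} → c * c'` one dimension higher, themselves in `W`.  Weak invertibility
(a coinductive notion) is the greatest fixed point: membership in some invertibility
system. -/
def InvSystem (W : Set C.Cell) : Prop :=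
  ∀ c ∈ W, 0 < C.dim c ∧ ∃ c' u u',
    C.dim c' = C.dim c ∧
    C.d false (C.dim c - 1) c' = C.d true (C.dim c - 1) c ∧
    C.d true (C.dim c - 1) c' = C.d false (C.dim c - 1) c ∧
    u ∈ W ∧ u' ∈ W ∧ C.dim u = C.dim c + 1 ∧ C.dim u' = C.dim c + 1 ∧
    C.d false (C.dim c) u = C.ident (C.d false (C.dim c - 1) c) ∧
    C.d true (C.dim c) u = C.comp (C.dim c - 1) c' c ∧
    C.d false (C.dim c) u' = C.ident (C.d true (C.dim c - 1) c) ∧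
    C.d true (C.dim c) u' = C.comp (C.dim c - 1) c c'

/-- A cell is weakly invertible when it belongs to some invertibility system
(coinductive definition of weak invertibility). -/
def WInv (c : C.Cell) : Prop := ∃ W : Set C.Cell, InvSystem C W ∧ c ∈ W

/-- ω-equivalence: two parallel cells `a ∼ b` are ω-equivalent when there is a weakly
invertible cell `c : a → b` one dimension higher. -/
def OEquiv (a b : C.Cell) : Prop :=
  Parallel C a b ∧ ∃ c, C.dim c = C.dim a + 1 ∧
    C.d false (C.dim a) c = a ∧ C.d true (C.dim a) c = b ∧ WInv C c

end OmegaCat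


set_option linter.unusedVariables false
set_option linter.all false

namespace OmegaCat

variable {C : OmegaCat}

lemma dim_d_eq {k : ℕ} {x : C.Cell} (h : k ≤ C.dim x) (α : Bool) :
    C.dim (C.d α k x) = k := by rw [C.dim_d]; omega

lemma d_rev (α β : Bool) {k j : ℕ} (h : k ≤ j) (x : C.Cell) :
    C.d α k x = C.d α k (C.d β j x) := (C.d_d α β k j x h).symm

lemma d_ident_le (α : Bool) {k : ℕ} {z : C.Cell} (h : k ≤ C.dim z) :
    C.d α k (C.ident z) = C.d α k z := by
  conv_rhs => rw [← C.d_ident α z]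
  exact d_rev α α h (C.ident z)

lemma d_d_same (α β : Bool) (k : ℕ) (x : C.Cell) :
    C.d α k (C.d β k x) = C.d β k x :=
  C.d_eq_self α k _ (by rw [C.dim_d]; omega)

lemma ident_comp' {f : C.Cell} {m : ℕ} (h : C.dim f = m + 1) :
    C.comp m (C.ident (C.d true m f)) f = f := by
  have h2 := C.ident_comp f (by omega)
  rwa [h, Nat.add_sub_cancel] at h2

lemma comp_ident' {f : C.Cell} {m : ℕ} (h : C.dim f = m + 1) :
    C.comp m f (C.ident (C.d false m f)) = f := by
  have h2 := C.comp_ident f (by omega)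
  rwa [h, Nat.add_sub_cancel] at h2

lemma d_u_aux (α β γ : Bool) {k j : ℕ} {u z : C.Cell}
    (h : C.d β j u = C.ident (C.d γ (j - 1) z))
    (hk : k ≤ j - 1) (hz : j - 1 ≤ C.dim z) :
    C.d α k u = C.d α k (C.d γ (j - 1) z) := by
  rw [d_rev α β (le_trans hk (Nat.sub_le j 1)) u, h]
  exact d_ident_le α (by rw [dim_d_eq hz]; exact hk)

lemma d_u_lt (α : Bool) (β γ : Bool) {k j : ℕ} {u z : C.Cell}
    (h : C.d β j u = C.ident (C.d γ (j - 1) z))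
    (hk : k ≤ j - 1) (hz : j - 1 ≤ C.dim z) :
    C.d α k u = C.d α k z := by
  rw [d_u_aux α β γ h hk hz, C.d_d α γ k (j-1) z hk]

lemma d_u_top (α : Bool) (β γ : Bool) {j : ℕ} {u z : C.Cell}
    (h : C.d β j u = C.ident (C.d γ (j - 1) z))
    (hz : j - 1 ≤ C.dim z) :
    C.d α (j - 1) u = C.d γ (j - 1) z := by
  rw [d_u_aux α β γ h le_rfl hz, d_d_same]

/-- The body of the invertibility-system condition, as a predicate. -/
def SysP (W : Set C.Cell) (c : C.Cell) : Prop :=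
  0 < C.dim c ∧ ∃ c' u u',
    C.dim c' = C.dim c ∧
    C.d false (C.dim c - 1) c' = C.d true (C.dim c - 1) c ∧
    C.d true (C.dim c - 1) c' = C.d false (C.dim c - 1) c ∧
    u ∈ W ∧ u' ∈ W ∧ C.dim u = C.dim c + 1 ∧ C.dim u' = C.dim c + 1 ∧
    C.d false (C.dim c) u = C.ident (C.d false (C.dim c - 1) c) ∧
    C.d true (C.dim c) u = C.comp (C.dim c - 1) c' c ∧
    C.d false (C.dim c) u' = C.ident (C.d true (C.dim c - 1) c) ∧
    C.d true (C.dim c) u' = C.comp (C.dim c - 1) c c'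

lemma invSystem_def {W : Set C.Cell} : InvSystem C W ↔ ∀ c ∈ W, SysP W c := Iff.rfl

lemma SysP.mono {W V : Set C.Cell} {c : C.Cell} (h : SysP W c) (hWV : W ⊆ V) :
    SysP V c := by
  obtain ⟨h0, c', u, u', h1, h2, h3, hu, hu', h4, h5, h6, h7, h8, h9⟩ := h
  exact ⟨h0, c', u, u', h1, h2, h3, hWV hu, hWV hu', h4, h5, h6, h7, h8, h9⟩

lemma sysP_winv {c : C.Cell} (h : WInv C c) : SysP {x | WInv C x} c := by
  obtain ⟨W, hW, hc⟩ := h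
  exact SysP.mono (hW c hc) (fun x hx => ⟨W, hW, hx⟩)

lemma sysP_ident (S : Set C.Cell) (hS : ∀ z, C.ident z ∈ S) (z : C.Cell) :
    SysP S (C.ident z) := by
  have hd : C.dim (C.ident z) = C.dim z + 1 := C.dim_ident z
  have hd1 : C.dim (C.ident z) - 1 = C.dim z := by omega
  have hcc : C.comp (C.dim z) (C.ident z) (C.ident z) = C.ident z := by
    have h2 := ident_comp' (f := C.ident z) (m := C.dim z) hd
    rwa [C.d_ident true z] at h2
  refine ⟨by omega, C.ident z, C.ident (C.ident z), C.ident (C.ident z), rfl, ?_, ?_,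
    hS _, hS _, by rw [hd, C.dim_ident, C.dim_ident], by rw [hd, C.dim_ident, C.dim_ident],
    ?_, ?_, ?_, ?_⟩ <;>
    rw [hd1] <;>
    simp only [C.d_ident, hcc]

lemma d_comp_top (α : Bool) {m n : ℕ} {p q vp vq : C.Cell}
    (hdims : C.dim p = C.dim q) (hq : C.dim q = n + 1) (hm : m < n)
    (hc : C.d false m p = C.d true m q)
    (hp : C.d α n p = vp) (hv : C.d α n q = vq) :
    C.d α n (C.comp m p q) = C.comp m vp vq := by
  rw [C.d_comp_higher α n m p q hdims hm (by omega) hc, hp, hv]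

lemma ident_comp_part (γ : Bool) {m n : ℕ} {g f : C.Cell}
    (hdg : C.dim g = n) (hnf : C.dim f = n) (hm : m + 1 < n)
    (hgf : C.d false m g = C.d true m f) :
    C.comp m (C.ident (C.d γ (n - 1) g)) (C.ident (C.d γ (n - 1) f)) =
      C.ident (C.comp m (C.d γ (n - 1) g) (C.d γ (n - 1) f)) := by
  refine (C.ident_comp_ident m _ _ ?_ ?_ ?_).symm
  · rw [dim_d_eq (by omega) γ, dim_d_eq (by omega) γ]
  · rw [dim_d_eq (by omega) γ]; omega
  · rw [C.d_d false γ m (n-1) g (by omega), C.d_d true γ m (n-1) f (by omega)]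
    exact hgf

lemma exchange_part {m n : ℕ} {a b c e : C.Cell}
    (hda : C.dim a = n) (hdb : C.dim b = n) (hdc : C.dim c = n) (hde : C.dim e = n)
    (hm : m + 1 < n)
    (h1 : C.d false (n-1) a = C.d true (n-1) b)
    (h2 : C.d false (n-1) c = C.d true (n-1) e)
    (h3 : C.d false m a = C.d true m c)
    (h4 : C.d false m b = C.d true m e) :
    C.comp m (C.comp (n-1) a b) (C.comp (n-1) c e) =
      C.comp (n-1) (C.comp m a c) (C.comp m b e) :=
  C.exchange m (n-1) a b c e (by omega) (by omega) (by rw [hdb, hda])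
    (by rw [hdc, hda]) (by rw [hde, hda]) h1 h2 h3 h4

lemma d_u_top' (α β γ : Bool) {m : ℕ} {u z : C.Cell}
    (h : C.d β (m + 1) u = C.ident (C.d γ m z)) (hz : m ≤ C.dim z) :
    C.d α m u = C.d γ m z := by
  rw [d_rev α β (Nat.le_succ m) u, h, d_ident_le α (le_of_eq (dim_d_eq hz γ).symm), d_d_same]

lemma assoc4 {m : ℕ} {p q r s : C.Cell}
    (hp : C.dim p = m + 1) (hq : C.dim q = m + 1) (hr : C.dim r = m + 1)
    (hs : C.dim s = m + 1)
    (hpq : C.d false m p = C.d true m q) (hqr : C.d false m q = C.d true m r)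
    (hrs : C.d false m r = C.d true m s) :
    C.comp m p (C.comp m (C.comp m q r) s) =
      C.comp m (C.comp m p q) (C.comp m r s) := by
  have h1 : C.dim (C.comp m r s) = m + 1 := by
    rw [C.dim_comp m r s (hr.trans hs.symm), hs]
  have h2 : C.d true m (C.comp m r s) = C.d true m r :=
    C.d_comp_tgt m r s (hr.trans hs.symm) (by omega) hrs
  rw [← C.comp_assoc m q r s (hq.trans hs.symm) (hr.trans hs.symm) (by omega) hrs hqr,
    C.comp_assoc m p q (C.comp m r s) (hp.trans h1.symm) (hq.trans h1.symm)
      (by omega) (by rw [h2]; exact hqr) hpq]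

lemma ident_comp'' {f z : C.Cell} {m : ℕ} (h : C.dim f = m + 1)
    (hz : z = C.d true m f) : C.comp m (C.ident z) f = f := by
  rw [hz]; exact ident_comp' h

lemma sysP_intro {S : Set C.Cell} {c : C.Cell} (n : ℕ) (hxd : C.dim c = n)
    (h0 : 0 < n) (c' u u' : C.Cell)
    (h1 : C.dim c' = n)
    (h2 : C.d false (n - 1) c' = C.d true (n - 1) c)
    (h3 : C.d true (n - 1) c' = C.d false (n - 1) c)
    (hu : u ∈ S) (hu' : u' ∈ S)
    (h4 : C.dim u = n + 1) (h5 : C.dim u' = n + 1)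
    (h6 : C.d false n u = C.ident (C.d false (n - 1) c))
    (h7 : C.d true n u = C.comp (n - 1) c' c)
    (h8 : C.d false n u' = C.ident (C.d true (n - 1) c))
    (h9 : C.d true n u' = C.comp (n - 1) c c') :
    SysP S c := by
  simp only [SysP, hxd]
  exact ⟨h0, c', u, u', h1, h2, h3, hu, hu', h4, h5, h6, h7, h8, h9⟩

lemma sysP_elim {S : Set C.Cell} {c : C.Cell} (n : ℕ) (hxd : C.dim c = n)
    (h : SysP S c) :
    0 < n ∧ ∃ c' u u',
    C.dim c' = n ∧
    C.d false (n - 1) c' = C.d true (n - 1) c ∧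
    C.d true (n - 1) c' = C.d false (n - 1) c ∧
    u ∈ S ∧ u' ∈ S ∧ C.dim u = n + 1 ∧ C.dim u' = n + 1 ∧
    C.d false n u = C.ident (C.d false (n - 1) c) ∧
    C.d true n u = C.comp (n - 1) c' c ∧
    C.d false n u' = C.ident (C.d true (n - 1) c) ∧
    C.d true n u' = C.comp (n - 1) c c' := by
  rw [← hxd]; exact h

lemma d_comp_low (α : Bool) {k m : ℕ} {g f : C.Cell}
    (hdim : C.dim g = C.dim f) (hm : m < C.dim f)
    (hc : C.d false m g = C.d true m f) (hk : k ≤ m) :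
    C.d α k (C.comp m g f) = C.d α k f := by
  rw [d_rev α false hk (C.comp m g f), C.d_comp_src m g f hdim hm hc,
    ← d_rev α false hk f]

lemma winv_ident (z : C.Cell) : WInv C (C.ident z) := by
  refine ⟨Set.range C.ident, ?_, ⟨z, rfl⟩⟩
  rintro c ⟨y, rfl⟩
  exact sysP_ident _ (fun w => Set.mem_range_self w) y

lemma whisker (S : Set C.Cell)
    (hSi : ∀ z, C.ident z ∈ S)
    (hSc : ∀ (k : ℕ) (p q : C.Cell), p ∈ S → q ∈ S → C.dim p = C.dim q →
      k < C.dim q → C.d false k p = C.d true k q → C.comp k p q ∈ S)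
    (m : ℕ) (A U B V T : C.Cell)
    (hAd : C.dim A = m + 1) (hBd : C.dim B = m + 1)
    (hUd : C.dim U = m + 1 + 1) (hVd : C.dim V = m + 1 + 1)
    (hUS : U ∈ S) (hVS : V ∈ S)
    (hUB : C.d false m U = C.d true m B)
    (hAU : C.d false m A = C.d true m U)
    (hred : C.comp m (C.d false (m + 1) U) B = B)
    (hVt : C.d true (m + 1) V = C.comp m A B)
    (hUt : C.d true (m + 1) U = T) :
    C.comp (m + 1) (C.comp m (C.ident A) (C.comp m U (C.ident B))) V ∈ S ∧
    C.dim (C.comp (m + 1) (C.comp m (C.ident A) (C.comp m U (C.ident B))) V)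
      = m + 1 + 1 ∧
    C.d false (m + 1) (C.comp (m + 1) (C.comp m (C.ident A) (C.comp m U (C.ident B))) V)
      = C.d false (m + 1) V ∧
    C.d true (m + 1) (C.comp (m + 1) (C.comp m (C.ident A) (C.comp m U (C.ident B))) V)
      = C.comp m A (C.comp m T B) := by
  have hmB : m ≤ C.dim B := by omega
  have hmA : m ≤ C.dim A := by omega
  have hIB : C.dim (C.ident B) = m + 1 + 1 := by rw [C.dim_ident, hBd]
  have hIA : C.dim (C.ident A) = m + 1 + 1 := by rw [C.dim_ident, hAd]
  have hdIB : ∀ α : Bool, C.d α (m + 1) (C.ident B) = B := by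
    intro α; rw [← hBd]; exact C.d_ident α B
  have hdIA : ∀ α : Bool, C.d α (m + 1) (C.ident A) = A := by
    intro α; rw [← hAd]; exact C.d_ident α A
  have c1 : C.d false m U = C.d true m (C.ident B) := by
    rw [d_ident_le true hmB]; exact hUB
  have hUIB : C.dim U = C.dim (C.ident B) := by rw [hUd, hIB]
  have hXd : C.dim (C.comp m U (C.ident B)) = m + 1 + 1 := by
    rw [C.dim_comp m U (C.ident B) hUIB, hIB]
  have c2 : C.d false m (C.ident A) = C.d true m (C.comp m U (C.ident B)) := by
    rw [d_ident_le false hmA, C.d_comp_tgt m U (C.ident B) hUIB (by omega) c1]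
    exact hAU
  have hwdims : C.dim (C.ident A) = C.dim (C.comp m U (C.ident B)) := by
    rw [hIA, hXd]
  have hwd : C.dim (C.comp m (C.ident A) (C.comp m U (C.ident B))) = m + 1 + 1 := by
    rw [C.dim_comp _ _ _ hwdims, hXd]
  have hXtop : C.d false (m + 1) (C.comp m U (C.ident B)) = B := by
    rw [d_comp_top false hUIB hIB (Nat.lt_succ_self m) c1 rfl (hdIB false)]
    exact hred
  have hXtop' : C.d true (m + 1) (C.comp m U (C.ident B)) = C.comp m T B :=
    d_comp_top true hUIB hIB (Nat.lt_succ_self m) c1 hUt (hdIB true)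
  have c3 : C.d false (m + 1) (C.comp m (C.ident A) (C.comp m U (C.ident B))) =
      C.d true (m + 1) V := by
    rw [d_comp_top false hwdims hXd (Nat.lt_succ_self m) c2 (hdIA false) hXtop, hVt]
  have MX : C.comp m U (C.ident B) ∈ S :=
    hSc m U (C.ident B) hUS (hSi B) hUIB (by omega) c1
  have Mw : C.comp m (C.ident A) (C.comp m U (C.ident B)) ∈ S :=
    hSc m (C.ident A) (C.comp m U (C.ident B)) (hSi A) MX hwdims (by omega) c2
  have hwV : C.dim (C.comp m (C.ident A) (C.comp m U (C.ident B))) = C.dim V := by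
    rw [hwd, hVd]
  refine ⟨hSc (m + 1) _ V Mw hVS hwV (by omega) c3, ?_, ?_, ?_⟩
  · rw [C.dim_comp _ _ _ hwV, hVd]
  · exact C.d_comp_src (m + 1) _ V hwV (by omega) c3
  · rw [C.d_comp_tgt (m + 1) _ V hwV (by omega) c3,
      d_comp_top true hwdims hXd (Nat.lt_succ_self m) c2 (hdIA true) hXtop']

lemma sysP_comp_low (S : Set C.Cell)
    (hSc : ∀ (k : ℕ) (p q : C.Cell), p ∈ S → q ∈ S → C.dim p = C.dim q →
      k < C.dim q → C.d false k p = C.d true k q → C.comp k p q ∈ S)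
    (m n : ℕ) (g f g' f' ug ug' uf uf' : C.Cell)
    (hdg : C.dim g = n) (hn : C.dim f = n) (hlow : m + 1 < n)
    (hgf : C.d false m g = C.d true m f)
    (hg'd : C.dim g' = n)
    (hg's : C.d false (n - 1) g' = C.d true (n - 1) g)
    (hg't : C.d true (n - 1) g' = C.d false (n - 1) g)
    (hugS : ug ∈ S) (hug'S : ug' ∈ S)
    (hugd : C.dim ug = n + 1) (hug'd : C.dim ug' = n + 1)
    (hugs : C.d false n ug = C.ident (C.d false (n - 1) g))
    (hugt : C.d true n ug = C.comp (n - 1) g' g)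
    (hug's : C.d false n ug' = C.ident (C.d true (n - 1) g))
    (hug't : C.d true n ug' = C.comp (n - 1) g g')
    (hf'd : C.dim f' = n)
    (hf's : C.d false (n - 1) f' = C.d true (n - 1) f)
    (hf't : C.d true (n - 1) f' = C.d false (n - 1) f)
    (hufS : uf ∈ S) (huf'S : uf' ∈ S)
    (hufd : C.dim uf = n + 1) (huf'd : C.dim uf' = n + 1)
    (hufs : C.d false n uf = C.ident (C.d false (n - 1) f))
    (huft : C.d true n uf = C.comp (n - 1) f' f)
    (huf's : C.d false n uf' = C.ident (C.d true (n - 1) f))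
    (huf't : C.d true n uf' = C.comp (n - 1) f f') :
    SysP S (C.comp m g f) := by
  have hdim : C.dim g = C.dim f := by omega
  have hxd : C.dim (C.comp m g f) = n := by rw [C.dim_comp m g f hdim, hn]
  have hn1 : m < n - 1 := by omega
  have hmn1 : m ≤ n - 1 := by omega
  have hn1n : n - 1 < n := by omega
  have hn1g : n - 1 ≤ C.dim g := by omega
  have hn1f : n - 1 ≤ C.dim f := by omega
  have hg'm : ∀ α : Bool, C.d α m g' = C.d α m g := by
    intro α; rw [d_rev α false hmn1 g', hg's, C.d_d α true m (n-1) g hmn1]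
  have hf'm : ∀ α : Bool, C.d α m f' = C.d α m f := by
    intro α; rw [d_rev α false hmn1 f', hf's, C.d_d α true m (n-1) f hmn1]
  have hugm : ∀ α : Bool, C.d α m ug = C.d α m g := by
    intro α; exact d_u_lt α false false hugs hmn1 hn1g
  have hug'm : ∀ α : Bool, C.d α m ug' = C.d α m g := by
    intro α; exact d_u_lt α false true hug's hmn1 hn1g
  have hufm : ∀ α : Bool, C.d α m uf = C.d α m f := by
    intro α; exact d_u_lt α false false hufs hmn1 hn1f
  have huf'm : ∀ α : Bool, C.d α m uf' = C.d α m f := by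
    intro α; exact d_u_lt α false true huf's hmn1 hn1f
  have hx'c : C.d false m g' = C.d true m f' := by rw [hg'm, hf'm]; exact hgf
  have hx'dims : C.dim g' = C.dim f' := by omega
  have hx'd : C.dim (C.comp m g' f') = n := by rw [C.dim_comp m g' f' hx'dims, hf'd]
  have hdxf : ∀ (α : Bool) k, m < k → k < n →
      C.d α k (C.comp m g f) = C.comp m (C.d α k g) (C.d α k f) := by
    intro α k h1 h2; exact C.d_comp_higher α k m g f hdim h1 (by omega) hgf
  have hdx'f : ∀ (α : Bool) k, m < k → k < n →
      C.d α k (C.comp m g' f') = C.comp m (C.d α k g') (C.d α k f') := by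
    intro α k h1 h2; exact C.d_comp_higher α k m g' f' hx'dims h1 (by omega) hx'c
  have hcu : C.d false m ug = C.d true m uf := by rw [hugm, hufm]; exact hgf
  have hcu' : C.d false m ug' = C.d true m uf' := by rw [hug'm, huf'm]; exact hgf
  have hudims : C.dim ug = C.dim uf := by omega
  have hu'dims : C.dim ug' = C.dim uf' := by omega
  have F2 : C.d false (n-1) (C.comp m g' f') = C.d true (n-1) (C.comp m g f) := by
    rw [hdx'f false (n-1) hn1 hn1n, hdxf true (n-1) hn1 hn1n, hg's, hf's]
  have F3 : C.d true (n-1) (C.comp m g' f') = C.d false (n-1) (C.comp m g f) := by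
    rw [hdx'f true (n-1) hn1 hn1n, hdxf false (n-1) hn1 hn1n, hg't, hf't]
  have M1 : C.comp m ug uf ∈ S := hSc m ug uf hugS hufS hudims (by omega) hcu
  have M2 : C.comp m ug' uf' ∈ S := hSc m ug' uf' hug'S huf'S hu'dims (by omega) hcu'
  have D1 : C.dim (C.comp m ug uf) = n + 1 := by rw [C.dim_comp m ug uf hudims, hufd]
  have D2 : C.dim (C.comp m ug' uf') = n + 1 := by
    rw [C.dim_comp m ug' uf' hu'dims, huf'd]
  have F4 : C.d false n (C.comp m ug uf) =
      C.ident (C.d false (n-1) (C.comp m g f)) := by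
    rw [d_comp_top false hudims hufd (by omega) hcu hugs hufs,
      ident_comp_part false hdg hn hlow hgf, hdxf false (n-1) hn1 hn1n]
  have F5 : C.d true n (C.comp m ug uf) =
      C.comp (n-1) (C.comp m g' f') (C.comp m g f) := by
    rw [d_comp_top true hudims hufd (by omega) hcu hugt huft]
    exact exchange_part hg'd hdg hf'd hn hlow hg's hf's hx'c hgf
  have F6 : C.d false n (C.comp m ug' uf') =
      C.ident (C.d true (n-1) (C.comp m g f)) := by
    rw [d_comp_top false hu'dims huf'd (by omega) hcu' hug's huf's,
      ident_comp_part true hdg hn hlow hgf, hdxf true (n-1) hn1 hn1n]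
  have F7 : C.d true n (C.comp m ug' uf') =
      C.comp (n-1) (C.comp m g f) (C.comp m g' f') := by
    rw [d_comp_top true hu'dims huf'd (by omega) hcu' hug't huf't]
    exact exchange_part hdg hg'd hn hf'd hlow hg't.symm hf't.symm hgf hx'c
  exact @sysP_intro C S (C.comp m g f) n hxd (Nat.lt_of_lt_of_le (Nat.zero_lt_succ m) (le_of_lt hlow)) (C.comp m g' f') (C.comp m ug uf)
    (C.comp m ug' uf') hx'd F2 F3 M1 M2 D1 D2 F4 F5 F6 F7

lemma sysP_comp_top (S : Set C.Cell)
    (hSi : ∀ z, C.ident z ∈ S)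
    (hSc : ∀ (k : ℕ) (p q : C.Cell), p ∈ S → q ∈ S → C.dim p = C.dim q →
      k < C.dim q → C.d false k p = C.d true k q → C.comp k p q ∈ S)
    (m : ℕ) (g f g' f' ug ug' uf uf' : C.Cell)
    (hdg : C.dim g = m + 1) (hnf : C.dim f = m + 1)
    (hgf : C.d false m g = C.d true m f)
    (hg'd : C.dim g' = m + 1)
    (hg's : C.d false m g' = C.d true m g)
    (hg't : C.d true m g' = C.d false m g)
    (hugS : ug ∈ S) (hug'S : ug' ∈ S)
    (hugd : C.dim ug = m + 1 + 1) (hug'd : C.dim ug' = m + 1 + 1)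
    (hugs : C.d false (m + 1) ug = C.ident (C.d false m g))
    (hugt : C.d true (m + 1) ug = C.comp m g' g)
    (hug's : C.d false (m + 1) ug' = C.ident (C.d true m g))
    (hug't : C.d true (m + 1) ug' = C.comp m g g')
    (hf'd : C.dim f' = m + 1)
    (hf's : C.d false m f' = C.d true m f)
    (hf't : C.d true m f' = C.d false m f)
    (hufS : uf ∈ S) (huf'S : uf' ∈ S)
    (hufd : C.dim uf = m + 1 + 1) (huf'd : C.dim uf' = m + 1 + 1)
    (hufs : C.d false (m + 1) uf = C.ident (C.d false m f))
    (huft : C.d true (m + 1) uf = C.comp m f' f)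
    (huf's : C.d false (m + 1) uf' = C.ident (C.d true m f))
    (huf't : C.d true (m + 1) uf' = C.comp m f f') :
    SysP S (C.comp m g f) := by
  have hdim : C.dim g = C.dim f := by omega
  have hxd : C.dim (C.comp m g f) = m + 1 := by rw [C.dim_comp m g f hdim, hnf]
  have hmf : m ≤ C.dim f := by omega
  have hmg : m ≤ C.dim g := by omega
  have hugm : ∀ α : Bool, C.d α m ug = C.d false m g := by
    intro α; exact d_u_top' α false false hugs hmg
  have hug'm : ∀ α : Bool, C.d α m ug' = C.d true m g := by
    intro α; exact d_u_top' α false true hug's hmg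
  have hufm : ∀ α : Bool, C.d α m uf = C.d false m f := by
    intro α; exact d_u_top' α false false hufs hmf
  have huf'm : ∀ α : Bool, C.d α m uf' = C.d true m f := by
    intro α; exact d_u_top' α false true huf's hmf
  have cx' : C.d false m f' = C.d true m g' := by
    rw [hf's, hg't]; exact hgf.symm
  have hx'dims : C.dim f' = C.dim g' := by omega
  have hx'd : C.dim (C.comp m f' g') = m + 1 := by
    rw [C.dim_comp m f' g' hx'dims, hg'd]
  have hxs : C.d false m (C.comp m g f) = C.d false m f :=
    C.d_comp_src m g f hdim (by omega) hgf
  have hxt : C.d true m (C.comp m g f) = C.d true m g :=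
    C.d_comp_tgt m g f hdim (by omega) hgf
  have F2 : C.d false m (C.comp m f' g') = C.d true m (C.comp m g f) := by
    rw [C.d_comp_src m f' g' hx'dims (by omega) cx', hg's, hxt]
  have F3 : C.d true m (C.comp m f' g') = C.d false m (C.comp m g f) := by
    rw [C.d_comp_tgt m f' g' hx'dims (by omega) cx', hf't, hxs]
  obtain ⟨M1, D1, S1, T1⟩ := whisker S hSi hSc m f' ug f uf (C.comp m g' g)
    hf'd hnf hugd hufd hugS hufS
    (by rw [hugm false]; exact hgf)
    (by rw [hf's, hugm true]; exact hgf.symm)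
    (by rw [hugs, hgf]; exact ident_comp' hnf)
    huft hugt
  obtain ⟨M2, D2, S2, T2⟩ := whisker S hSi hSc m g uf' g' ug' (C.comp m f f')
    hdg hg'd huf'd hug'd huf'S hug'S
    (by rw [huf'm false, hg't]; exact hgf.symm)
    (by rw [huf'm true]; exact hgf)
    (by rw [huf's]; exact ident_comp'' hg'd (by rw [hg't]; exact hgf.symm))
    hug't huf't
  have F4 : C.d false (m + 1)
      (C.comp (m + 1) (C.comp m (C.ident f') (C.comp m ug (C.ident f))) uf) =
      C.ident (C.d false m (C.comp m g f)) := by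
    rw [S1, hufs, hxs]
  have F5 : C.d true (m + 1)
      (C.comp (m + 1) (C.comp m (C.ident f') (C.comp m ug (C.ident f))) uf) =
      C.comp m (C.comp m f' g') (C.comp m g f) := by
    rw [T1]; exact assoc4 hf'd hg'd hdg hnf cx' hg's hgf
  have F6 : C.d false (m + 1)
      (C.comp (m + 1) (C.comp m (C.ident g) (C.comp m uf' (C.ident g'))) ug') =
      C.ident (C.d true m (C.comp m g f)) := by
    rw [S2, hug's, hxt]
  have F7 : C.d true (m + 1)
      (C.comp (m + 1) (C.comp m (C.ident g) (C.comp m uf' (C.ident g'))) ug') =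
      C.comp m (C.comp m g f) (C.comp m f' g') := by
    rw [T2]; exact assoc4 hdg hnf hf'd hg'd hgf hf't.symm cx'
  exact @sysP_intro C S (C.comp m g f) (m + 1) hxd (Nat.succ_pos m) (C.comp m f' g')
    (C.comp (m + 1) (C.comp m (C.ident f') (C.comp m ug (C.ident f))) uf)
    (C.comp (m + 1) (C.comp m (C.ident g) (C.comp m uf' (C.ident g'))) ug')
    hx'd F2 F3 M1 M2 D1 D2 F4 F5 F6 F7

lemma sysP_comp (S : Set C.Cell)
    (hSi : ∀ z, C.ident z ∈ S)
    (hSc : ∀ (k : ℕ) (p q : C.Cell), p ∈ S → q ∈ S → C.dim p = C.dim q →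
      k < C.dim q → C.d false k p = C.d true k q → C.comp k p q ∈ S)
    (m : ℕ) (g f : C.Cell)
    (hg : SysP S g) (hf : SysP S f)
    (hdim : C.dim g = C.dim f) (hm : m < C.dim f)
    (hgf : C.d false m g = C.d true m f) :
    SysP S (C.comp m g f) := by
  obtain ⟨-, g', ug, ug', hg'd, hg's, hg't, hugS, hug'S, hugd, hug'd,
    hugs, hugt, hug's, hug't⟩ := hg
  obtain ⟨-, f', uf, uf', hf'd, hf's, hf't, hufS, huf'S, hufd, huf'd,
    hufs, huft, huf's, huf't⟩ := hf
  rw [hdim] at hg'd hg's hg't hugd hug'd hugs hugt hug's hug't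
  rcases Nat.lt_or_ge (m + 1) (C.dim f) with hlow | htop
  · exact sysP_comp_low S hSc m (C.dim f) g f g' f' ug ug' uf uf' hdim rfl hlow hgf
      hg'd hg's hg't hugS hug'S hugd hug'd hugs hugt hug's hug't
      hf'd hf's hf't hufS huf'S hufd huf'd hufs huft huf's huf't
  · have he : C.dim f = m + 1 := by omega
    rw [he, Nat.add_sub_cancel] at hg's hg't hugs hugt hug's hug't
    rw [he, Nat.add_sub_cancel] at hf's hf't hufs huft huf's huf't
    rw [he] at hg'd hf'd hugd hug'd hufd huf'd
    exact sysP_comp_top S hSi hSc m g f g' f' ug ug' uf uf'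
      (by omega) he hgf hg'd hg's hg't hugS hug'S hugd hug'd hugs hugt hug's hug't
      hf'd hf's hf't hufS huf'S hufd huf'd hufs huft huf's huf't

end OmegaCat

/-- The closure of the weakly invertible cells under admissible compositions. -/
inductive OmegaCat.Gen (C : OmegaCat) : C.Cell → Prop
  | base {c : C.Cell} : OmegaCat.WInv C c → OmegaCat.Gen C c
  | cmp (m : ℕ) {g f : C.Cell} : OmegaCat.Gen C g → OmegaCat.Gen C f →
      C.dim g = C.dim f → m < C.dim f → C.d false m g = C.d true m f →
      OmegaCat.Gen C (C.comp m g f)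

namespace OmegaCat

variable {C : OmegaCat}

lemma gen_sysP {c : C.Cell} (h : Gen C c) : SysP {x | Gen C x} c := by
  induction h with
  | base h => exact SysP.mono (sysP_winv h) (fun x hx => Gen.base hx)
  | cmp m hg hf hdim hm hgf ihg ihf =>
      exact sysP_comp {x | Gen C x} (fun z => Gen.base (winv_ident z))
        (fun k p q hp hq e1 e2 e3 => Gen.cmp k hp hq e1 e2 e3)
        m _ _ ihg ihf hdim hm hgf

lemma winv_of_gen {c : C.Cell} (h : Gen C c) : WInv C c :=
  ⟨{x | Gen C x}, fun x hx => gen_sysP hx, h⟩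

lemma winv_comp {m : ℕ} {g f : C.Cell} (hg : WInv C g) (hf : WInv C f)
    (hdim : C.dim g = C.dim f) (hm : m < C.dim f)
    (hgf : C.d false m g = C.d true m f) : WInv C (C.comp m g f) :=
  winv_of_gen (Gen.cmp m (Gen.base hg) (Gen.base hf) hdim hm hgf)

lemma winv_inv {c : C.Cell} (h : WInv C c) :
    ∃ c', C.dim c' = C.dim c ∧
      C.d false (C.dim c - 1) c' = C.d true (C.dim c - 1) c ∧
      C.d true (C.dim c - 1) c' = C.d false (C.dim c - 1) c ∧ WInv C c' := by
  obtain ⟨h0, c', u, u', h1, h2, h3, hu, hu', h4, h5, h6, h7, h8, h9⟩ := sysP_winv h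
  refine ⟨c', h1, h2, h3, insert c' {x | WInv C x}, ?_, Set.mem_insert _ _⟩
  intro x hx
  rcases Set.mem_insert_iff.mp hx with rfl | hx
  · exact sysP_intro (C.dim c) h1 h0 c u' u rfl h3.symm h2.symm
      (Set.mem_insert_of_mem _ hu') (Set.mem_insert_of_mem _ hu) h5 h4
      (by rw [h8, h2]) h9 (by rw [h6, h3]) h7
  · exact SysP.mono (sysP_winv hx) (Set.subset_insert _ _)

lemma parallel_refl (a : C.Cell) : Parallel C a a := ⟨rfl, fun k _ => ⟨rfl, rfl⟩⟩

lemma parallel_symm {a b : C.Cell} (h : Parallel C a b) : Parallel C b a := by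
  obtain ⟨h1, h2⟩ := h
  exact ⟨h1.symm, fun k hk =>
    ⟨(h2 k (by omega)).1.symm, (h2 k (by omega)).2.symm⟩⟩

lemma parallel_trans {a b c : C.Cell} (hab : Parallel C a b)
    (hbc : Parallel C b c) : Parallel C a c := by
  obtain ⟨h1, h2⟩ := hab; obtain ⟨h3, h4⟩ := hbc
  refine ⟨h1.trans h3, fun k hk => ?_⟩
  obtain ⟨e1, e2⟩ := h2 k hk
  obtain ⟨e3, e4⟩ := h4 k (by omega)
  exact ⟨e1.trans e3, e2.trans e4⟩

lemma oequiv_refl (a : C.Cell) : OEquiv C a a :=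
  ⟨parallel_refl a, C.ident a, C.dim_ident a, C.d_ident false a,
    C.d_ident true a, winv_ident a⟩

lemma oequiv_symm {a b : C.Cell} (h : OEquiv C a b) : OEquiv C b a := by
  obtain ⟨hp, c, hcd, hcs, hct, hw⟩ := h
  obtain ⟨c', h1, h2, h3, hw'⟩ := winv_inv hw
  have hab : C.dim a = C.dim b := hp.1
  have hd1 : C.dim c - 1 = C.dim a := by omega
  rw [hd1] at h2 h3
  exact ⟨parallel_symm hp, c', by rw [h1, hcd, hab], by rw [← hab, h2, hct],
    by rw [← hab, h3, hcs], hw'⟩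

lemma oequiv_trans {a b c : C.Cell} (h1 : OEquiv C a b) (h2 : OEquiv C b c) :
    OEquiv C a c := by
  obtain ⟨hp1, p, hpd, hps, hpt, hwp⟩ := h1
  obtain ⟨hp2, q, hqd, hqs, hqt, hwq⟩ := h2
  have hab : C.dim a = C.dim b := hp1.1
  rw [← hab] at hqd hqs hqt
  have hqpd : C.dim q = C.dim p := by omega
  have hmp : C.dim a < C.dim p := by omega
  have hqp : C.d false (C.dim a) q = C.d true (C.dim a) p := by rw [hqs, hpt]
  refine ⟨parallel_trans hp1 hp2, C.comp (C.dim a) q p, ?_, ?_, ?_,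
    winv_comp hwq hwp hqpd hmp hqp⟩
  · rw [C.dim_comp _ q p hqpd, hpd]
  · rw [C.d_comp_src (C.dim a) q p hqpd hmp hqp, hps]
  · rw [C.d_comp_tgt (C.dim a) q p hqpd hmp hqp, hqt]

lemma oequiv_comp {m : ℕ} {a b c e : C.Cell} (hm : m < C.dim a)
    (hba : C.dim b = C.dim a) (hca : C.dim c = C.dim a) (hea : C.dim e = C.dim a)
    (h1 : C.d false m b = C.d true m a) (h2 : C.d false m e = C.d true m c)
    (hac : OEquiv C a c) (hbe : OEquiv C b e) :
    OEquiv C (C.comp m b a) (C.comp m e c) := by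
  obtain ⟨hpac, p, hpd, hps, hpt, hwp⟩ := hac
  obtain ⟨hpbe, q, hqd, hqs, hqt, hwq⟩ := hbe
  rw [hba] at hqd hqs hqt
  have hec : C.dim e = C.dim c := by omega
  have hqpd : C.dim q = C.dim p := by omega
  have hmp : m < C.dim p := by omega
  have hmad : m ≤ C.dim a := le_of_lt hm
  have hqm : C.d false m q = C.d false m b := by
    rw [d_rev false false hmad q, hqs]
  have hpm : C.d true m p = C.d true m c := by
    rw [d_rev true true hmad p, hpt]
  have hqp : C.d false m q = C.d true m p := by
    rw [hqm, hpm, h1]; exact (hpac.2 m hm).2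
  have hba' : C.dim (C.comp m b a) = C.dim a := C.dim_comp m b a hba
  have hec' : C.dim (C.comp m e c) = C.dim a := by rw [C.dim_comp m e c hec, hca]
  have hr : ∀ α : Bool, C.d α (C.dim a) (C.comp m q p) =
      C.comp m (C.d α (C.dim a) q) (C.d α (C.dim a) p) := by
    intro α; exact C.d_comp_higher α (C.dim a) m q p hqpd hm (by omega) hqp
  have hpar : Parallel C (C.comp m b a) (C.comp m e c) := by
    refine ⟨by rw [hba', hec'], fun k hk => ?_⟩
    rw [hba'] at hk
    rcases Nat.lt_or_ge m k with hmk | hkm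
    · have hB : ∀ α : Bool, C.d α k (C.comp m b a) =
          C.comp m (C.d α k b) (C.d α k a) := by
        intro α; exact C.d_comp_higher α k m b a hba hmk (by omega) h1
      have hE : ∀ α : Bool, C.d α k (C.comp m e c) =
          C.comp m (C.d α k e) (C.d α k c) := by
        intro α; exact C.d_comp_higher α k m e c hec hmk (by omega) h2
      obtain ⟨e1, e2⟩ := hpac.2 k hk
      obtain ⟨e3, e4⟩ := hpbe.2 k (by omega)
      exact ⟨by rw [hB false, hE false, e1, e3], by rw [hB true, hE true, e2, e4]⟩
    · have hB : ∀ α : Bool, C.d α k (C.comp m b a) = C.d α k a := by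
        intro α; exact d_comp_low α hba hm h1 hkm
      have hE : ∀ α : Bool, C.d α k (C.comp m e c) = C.d α k c := by
        intro α; exact d_comp_low α hec (by omega) h2 hkm
      obtain ⟨e1, e2⟩ := hpac.2 k hk
      exact ⟨by rw [hB false, hE false, e1], by rw [hB true, hE true, e2]⟩
  refine ⟨hpar, C.comp m q p, ?_, ?_, ?_, winv_comp hwq hwp hqpd hmp hqp⟩
  · rw [hba', C.dim_comp m q p hqpd, hpd]
  · rw [hba', hr false, hqs, hps]
  · rw [hba', hr true, hqt, hpt]

end OmegaCat

/-- In a strict ω-category, ω-equivalence on parallel `n`-cells is reflexive, symmetric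
and transitive; moreover it is compatible with compositions: if `a ∼ c` and `b ∼ d` for
`m`-composable pairs `(a,b)` and `(c,d)` of `n`-cells, then `b *ₘ a ∼ d *ₘ c`. -/
theorem oequiv_equivalence_and_compat (C : OmegaCat) :
    (∀ a : C.Cell, OmegaCat.OEquiv C a a) ∧
    (∀ a b : C.Cell, OmegaCat.OEquiv C a b → OmegaCat.OEquiv C b a) ∧
    (∀ a b c : C.Cell,
      OmegaCat.OEquiv C a b → OmegaCat.OEquiv C b c → OmegaCat.OEquiv C a c) ∧
    (∀ (m : ℕ) (a b c e : C.Cell), m < C.dim a →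
      C.dim b = C.dim a → C.dim c = C.dim a → C.dim e = C.dim a →
      C.d false m b = C.d true m a → C.d false m e = C.d true m c →
      OmegaCat.OEquiv C a c → OmegaCat.OEquiv C b e →
      OmegaCat.OEquiv C (C.comp m b a) (C.comp m e c)) := by
  exact ⟨fun a => OmegaCat.oequiv_refl a,
    fun _ _ h => OmegaCat.oequiv_symm h,
    fun _ _ _ h1 h2 => OmegaCat.oequiv_trans h1 h2,
    fun _ _ _ _ _ hm d1 d2 d3 e1 e2 hac hbe =>
      OmegaCat.oequiv_comp hm d1 d2 d3 e1 e2 hac hbe⟩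
end

section
/- Let K be a directed augmented complex with loop-free unitary basis, and let a, c be chains with n := min(|a|, |c|) and r_{n-1}(a + c) = 0. Then for α ∈ {−, +}: d^α_{n-1}(a + c) = (d^α_{n-1}(a) ∖ d^{−α}_{n-1}(c)) + (d^α_{n-1}(c) ∖ d^{−α}_{n-1}(a)). -/
/-! Chains in an augmented directed complex with basis.  An augmented directed complex
with basis `B` is encoded by a degree function `deg : B → ℕ`, a differential given on
basis elements `diff : B → (B →₀ ℤ)` and an augmentation `aug : B → ℤ` on the basis
(the predicate `IsADC` expresses the chain-complex and augmentation axioms).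
A *chain* is a finitely supported function `B → ℕ`, i.e. a nonnegative combination of
basis elements. -/

namespace Chains

/-- Positive part of an integral combination, as a chain. -/
noncomputable def posPart {B : Type*} (x : B →₀ ℤ) : B →₀ ℕ :=
  x.mapRange Int.toNat (by simp)

/-- Negative part of an integral combination, as a chain. -/
noncomputable def negPart {B : Type*} (x : B →₀ ℤ) : B →₀ ℕ :=
  x.mapRange (fun k => (-k).toNat) (by simp)

/-- Inclusion of chains into integral combinations. -/
noncomputable def toInt {B : Type*} (a : B →₀ ℕ) : B →₀ ℤ :=
  a.mapRange (Nat.cast : ℕ → ℤ) (by simp)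

/-- Pointwise minimum (`∧`) of chains. -/
noncomputable def cmin {B : Type*} [DecidableEq B] (a a' : B →₀ ℕ) : B →₀ ℕ :=
  Finsupp.zipWith min (by simp) a a'

/-- Pointwise maximum (`∨`) of chains. -/
noncomputable def cmax {B : Type*} [DecidableEq B] (a a' : B →₀ ℕ) : B →₀ ℕ :=
  Finsupp.zipWith max (by simp) a a'

/-- Truncated subtraction (`∖`) of chains. -/
noncomputable def csub {B : Type*} [DecidableEq B] (a a' : B →₀ ℕ) : B →₀ ℕ :=
  Finsupp.zipWith (fun m n => m - n) (by simp) a a'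

/-- The differential extended to chains. -/
noncomputable def bdry {B : Type*} (diff : B → B →₀ ℤ) (a : B →₀ ℕ) : B →₀ ℤ :=
  a.sum fun b k => (k : ℤ) • diff b

/-- The positive (`α = true`) and negative (`α = false`) part of the differential. -/
noncomputable def bdryP {B : Type*} (diff : B → B →₀ ℤ) (α : Bool) (a : B →₀ ℕ) :
    B →₀ ℕ :=
  if α then posPart (bdry diff a) else negPart (bdry diff a)

open Classical in
/-- The degree-`k` homogeneous part `(a)ₖ` of a chain. -/
noncomputable def homog {B : Type*} (deg : B → ℕ) (k : ℕ) (a : B →₀ ℕ) : B →₀ ℕ :=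
  a.filter fun b => deg b = k

open Classical in
/-- The `k`-rest `rₖ(a)`: the part of a chain in degrees `≤ k`. -/
noncomputable def trunc {B : Type*} (deg : B → ℕ) (k : ℕ) (a : B →₀ ℕ) : B →₀ ℕ :=
  a.filter fun b => deg b ≤ k

/-- One step of the source/target operator: `∂^α((a)_{n+1}) + rₙ(a)`. -/
noncomputable def dstep {B : Type*} [DecidableEq B] (deg : B → ℕ) (diff : B → B →₀ ℤ)
    (α : Bool) (n : ℕ) (a : B →₀ ℕ) : B →₀ ℕ :=
  bdryP diff α (homog deg (n + 1) a) + trunc deg n a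

/-- Auxiliary downward recursion for the source/target operators. -/
noncomputable def dmapAux {B : Type*} [DecidableEq B] (deg : B → ℕ) (diff : B → B →₀ ℤ)
    (α : Bool) : ℕ → ℕ → (B →₀ ℕ) → (B →₀ ℕ)
  | _, 0, a => a
  | n, k + 1, a => dstep deg diff α n (dmapAux deg diff α (n + 1) k a)

/-- Degree of a chain (0 for the zero chain). -/
def degC {B : Type*} (deg : B → ℕ) (a : B →₀ ℕ) : ℕ := a.support.sup deg

/-- The source (`α = false`) and target (`α = true`) operators `d^α_n` on chains:
`d^α_n a = a` if `|a| ≤ n`, and otherwise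
`d^α_n a = ∂^α((d^α_{n+1}a)_{n+1}) + rₙ(d^α_{n+1}a)`. -/
noncomputable def dmap {B : Type*} [DecidableEq B] (deg : B → ℕ) (diff : B → B →₀ ℤ)
    (α : Bool) (n : ℕ) (a : B →₀ ℕ) : B →₀ ℕ :=
  dmapAux deg diff α n (degC deg a - n) a

/-- The augmentation evaluated on a chain. -/
noncomputable def augC {B : Type*} (aug : B → ℤ) (a : B →₀ ℕ) : ℤ :=
  a.sum fun b k => (k : ℤ) * aug b

/-- `e(a) := e(d⁺₀ a)`. -/
noncomputable def eC {B : Type*} [DecidableEq B] (deg : B → ℕ) (diff : B → B →₀ ℤ)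
    (aug : B → ℤ) (a : B →₀ ℕ) : ℤ :=
  augC aug (dmap deg diff true 0 a)

/-- A chain is coherent when `e(a) = 1`. -/
def Coherent {B : Type*} [DecidableEq B] (deg : B → ℕ) (diff : B → B →₀ ℤ)
    (aug : B → ℤ) (a : B →₀ ℕ) : Prop :=
  eC deg diff aug a = 1

/-- The axioms of an augmented directed complex (with basis): the differential decreases
degree by one, vanishes in degree 0, squares to zero, and is annihilated by the
augmentation. -/
structure IsADC {B : Type*} (deg : B → ℕ) (diff : B → B →₀ ℤ) (aug : B → ℤ) : Prop where
  diff_deg : ∀ b b', b' ∈ (diff b).support → deg b' + 1 = deg b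
  diff_zero : ∀ b, deg b = 0 → diff b = 0
  diff_sq : ∀ b, ((diff b).sum fun b' k => k • diff b') = 0
  aug_diff : ∀ b, deg b = 1 → ((diff b).sum fun b' k => k * aug b') = 0

/-- The basis is unitary when the table `⟨b⟩` of every basis element is coherent,
i.e. `e(d^α₀⟨b⟩) = 1` for both `α`. -/
def Unitary {B : Type*} [DecidableEq B] (deg : B → ℕ) (diff : B → B →₀ ℤ)
    (aug : B → ℤ) : Prop :=
  ∀ (b : B) (α : Bool), augC aug (dmap deg diff α 0 (Finsupp.single b 1)) = 1

/-- The elementary relation `x ⊙ₙ y` on basis elements of degree `≥ n`: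
`⟨x⟩ₙ⁻ ∧ ⟨y⟩ₙ⁺ ≠ 0`. -/
def relO {B : Type*} [DecidableEq B] (deg : B → ℕ) (diff : B → B →₀ ℤ)
    (n : ℕ) (x y : B) : Prop :=
  n ≤ deg x ∧ n ≤ deg y ∧
    ¬ Disjoint (dmap deg diff false n (Finsupp.single x 1)).support
        (dmap deg diff true n (Finsupp.single y 1)).support

/-- The basis is loop-free when for every `n` the reflexive-transitive closure of `⊙ₙ`
is a partial order (i.e. is antisymmetric). -/
def LoopFree {B : Type*} [DecidableEq B] (deg : B → ℕ) (diff : B → B →₀ ℤ) : Prop :=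
  ∀ (n : ℕ) (x y : B), Relation.ReflTransGen (relO deg diff n) x y →
    Relation.ReflTransGen (relO deg diff n) y x → x = y

/-- The composition degree `|a|_c` of a chain, an element of `ℤ` (with value `-1` when
the defining set is empty): `sup{ n | ∃ b ≠ b' ∈ supp a, |b| ≥ |b'| > n }`. -/
noncomputable def compDeg {B : Type*} (deg : B → ℕ) (a : B →₀ ℕ) : ℤ :=
  sSup (insert (-1) {n : ℤ | ∃ b ∈ a.support, ∃ b' ∈ a.support,
    b ≠ b' ∧ (deg b' : ℤ) ≤ (deg b : ℤ) ∧ n < (deg b' : ℤ)})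

/-- The `n`-composition of chains: `x *ₙ y := (x - d⁻ₙ(x) + y)₊`. -/
noncomputable def compC {B : Type*} [DecidableEq B] (deg : B → ℕ) (diff : B → B →₀ ℤ)
    (n : ℕ) (x y : B →₀ ℕ) : B →₀ ℕ :=
  posPart (toInt x - toInt (dmap deg diff false n x) + toInt y)

/-- Iterated `n`-composition of a list of chains (associating to the right). -/
noncomputable def compList {B : Type*} [DecidableEq B] (deg : B → ℕ)
    (diff : B → B →₀ ℤ) (n : ℕ) : List (B →₀ ℕ) → (B →₀ ℕ)
  | [] => 0
  | [x] => x
  | x :: y :: l => compC deg diff n x (compList deg diff n (y :: l))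

end Chains

namespace ChainsAux
set_option linter.unusedSectionVars false

open Chains Finsupp

variable {B : Type*} [DecidableEq B] (deg : B → ℕ) (diff : B → B →₀ ℤ)

/-- The `ℤ`-linear extension of the differential. -/
noncomputable def Bh : (B →₀ ℤ) →ₗ[ℤ] (B →₀ ℤ) :=
  Finsupp.lsum ℤ fun b => LinearMap.toSpanSingleton ℤ (B →₀ ℤ) (diff b)

lemma Bh_apply (z : B →₀ ℤ) : Bh diff z = z.sum fun b k => k • diff b := rfl

lemma bdry_eq_Bh (a : B →₀ ℕ) : bdry diff a = Bh diff (toInt a) := by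
  rw [Bh_apply, bdry, toInt, Finsupp.sum_mapRange_index]
  simp

lemma Bh_Bh {aug : B → ℤ} (hADC : IsADC deg diff aug) (z : B →₀ ℤ) :
    Bh diff (Bh diff z) = 0 := by
  induction z using Finsupp.induction with
  | zero => simp
  | single_add b k f _ _ ih =>
    rw [map_add, map_add, ih, add_zero]
    have h1 : Bh diff (Finsupp.single b k) = k • diff b := by
      rw [Bh_apply, Finsupp.sum_single_index]; simp
    rw [h1, map_smul]
    have : Bh diff (diff b) = 0 := hADC.diff_sq b
    rw [this, smul_zero]

lemma toInt_posPart_sub_negPart (z : B →₀ ℤ) :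
    toInt (posPart z) - toInt (negPart z) = z := by
  ext b
  simp only [toInt, Chains.posPart, Chains.negPart, Finsupp.mapRange_apply,
    Finsupp.coe_tsub, Pi.sub_apply, Finsupp.sub_apply]
  omega

lemma bdry_add (x y : B →₀ ℕ) : bdry diff (x + y) = bdry diff x + bdry diff y := by
  unfold bdry
  rw [Finsupp.sum_add_index]
  · intro b _; simp
  · intro b _ k1 k2; push_cast; rw [add_smul]

lemma toInt_add (x y : B →₀ ℕ) : toInt (x + y) = toInt x + toInt y := by
  ext b; simp [toInt, Finsupp.mapRange_apply]

/-- `bdry (posPart w) - bdry (negPart w) = Bh w`. -/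
lemma bdry_posPart_sub_negPart (w : B →₀ ℤ) :
    bdry diff (posPart w) - bdry diff (negPart w) = Bh diff w := by
  rw [bdry_eq_Bh, bdry_eq_Bh, ← map_sub, toInt_posPart_sub_negPart]

/-- Membership in the support of `bdry`. -/
lemma support_bdry_subset (x : B →₀ ℕ) :
    (bdry diff x).support ⊆ x.support.biUnion fun b => (diff b).support := by
  classical
  refine Finset.Subset.trans Finsupp.support_sum ?_
  intro b hb
  simp only [Finset.mem_biUnion] at hb ⊢
  obtain ⟨b', hb', hbb⟩ := hb
  refine ⟨b', hb', ?_⟩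
  rw [Finsupp.mem_support_iff] at hbb ⊢
  intro h
  apply hbb
  simp [h]

lemma degC_le_iff {x : B →₀ ℕ} {m : ℕ} :
    degC deg x ≤ m ↔ ∀ b ∈ x.support, deg b ≤ m :=
  Finset.sup_le_iff

lemma support_homog {k : ℕ} {x : B →₀ ℕ} {b : B} (h : b ∈ (homog deg k x).support) :
    b ∈ x.support ∧ deg b = k := by
  classical
  rw [homog, Finsupp.support_filter, Finset.mem_filter] at h
  exact h

lemma support_trunc {k : ℕ} {x : B →₀ ℕ} {b : B} (h : b ∈ (trunc deg k x).support) :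
    b ∈ x.support ∧ deg b ≤ k := by
  classical
  rw [trunc, Finsupp.support_filter, Finset.mem_filter] at h
  exact h

/-- Support of the boundary-part of the degree-`(m+1)` component lies in degree `m`. -/
lemma deg_of_mem_bdryP {aug : B → ℤ} (hADC : IsADC deg diff aug) (α : Bool) (m : ℕ)
    (x : B →₀ ℕ) {b : B} (hb : b ∈ (bdryP diff α (homog deg (m + 1) x)).support) :
    deg b = m := by
  have hb' : b ∈ (bdry diff (homog deg (m + 1) x)).support := by
    cases α <;>
      simpa [bdryP, Chains.posPart, Chains.negPart] using
        Finsupp.support_mapRange (hf := by simp) hb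
  obtain ⟨b', hb', hbb⟩ := Finset.mem_biUnion.mp (support_bdry_subset diff _ hb')
  have := hADC.diff_deg b' b hbb
  have := (support_homog deg hb').2
  omega

lemma homog_apply (k : ℕ) (x : B →₀ ℕ) (b : B) :
    homog deg k x b = if deg b = k then x b else 0 := by
  rw [homog]
  split_ifs with h
  · exact Finsupp.filter_apply_pos _ _ h
  · exact Finsupp.filter_apply_neg _ _ h

lemma trunc_apply (k : ℕ) (x : B →₀ ℕ) (b : B) :
    trunc deg k x b = if deg b ≤ k then x b else 0 := by
  rw [trunc]
  split_ifs with h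
  · exact Finsupp.filter_apply_pos _ _ h
  · exact Finsupp.filter_apply_neg _ _ h

lemma homog_add (k : ℕ) (x y : B →₀ ℕ) :
    homog deg k (x + y) = homog deg k x + homog deg k y := by
  ext b; simp only [homog_apply, Finsupp.add_apply]; split_ifs <;> simp

lemma trunc_add (k : ℕ) (x y : B →₀ ℕ) :
    trunc deg k (x + y) = trunc deg k x + trunc deg k y := by
  ext b; simp only [trunc_apply, Finsupp.add_apply]; split_ifs <;> simp

lemma homog_eq_self {k : ℕ} {x : B →₀ ℕ} (h : ∀ b ∈ x.support, deg b = k) :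
    homog deg k x = x := by
  ext b
  rw [homog_apply]
  by_cases hb : b ∈ x.support
  · rw [if_pos (h b hb)]
  · rw [Finsupp.notMem_support_iff.mp hb]; simp

lemma trunc_eq_self {k : ℕ} {x : B →₀ ℕ} (h : ∀ b ∈ x.support, deg b ≤ k) :
    trunc deg k x = x := by
  ext b
  rw [trunc_apply]
  by_cases hb : b ∈ x.support
  · rw [if_pos (h b hb)]
  · rw [Finsupp.notMem_support_iff.mp hb]; simp

lemma trunc_eq_zero {k : ℕ} {x : B →₀ ℕ} (h : ∀ b ∈ x.support, k < deg b) :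
    trunc deg k x = 0 := by
  ext b
  rw [trunc_apply]
  by_cases hb : b ∈ x.support
  · rw [if_neg (Nat.not_le.mpr (h b hb))]; simp
  · rw [Finsupp.notMem_support_iff.mp hb]; simp

lemma homog_eq_zero_of_deg_lt {k : ℕ} {x : B →₀ ℕ} (h : ∀ b ∈ x.support, deg b < k) :
    homog deg k x = 0 := by
  ext b
  rw [homog_apply]
  by_cases hb : b ∈ x.support
  · rw [if_neg (by have := h b hb; omega)]; simp
  · rw [Finsupp.notMem_support_iff.mp hb]; simp

lemma trunc_trunc {j m : ℕ} (hjm : j ≤ m) (x : B →₀ ℕ) :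
    trunc deg j (trunc deg m x) = trunc deg j x := by
  ext b
  simp only [trunc_apply]
  split_ifs with h1 h2 <;> first | rfl | omega

lemma homog_add_trunc {m : ℕ} {x : B →₀ ℕ} (h : degC deg x ≤ m + 1) :
    homog deg (m + 1) x + trunc deg m x = x := by
  ext b
  rw [Finsupp.add_apply, homog_apply, trunc_apply]
  by_cases hb : b ∈ x.support
  · have := (degC_le_iff deg).mp h b hb
    rcases Nat.lt_or_ge (deg b) (m + 1) with h1 | h1
    · rw [if_neg (by omega), if_pos (by omega), zero_add]
    · rw [if_pos (by omega), if_neg (by omega), add_zero]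
  · rw [Finsupp.notMem_support_iff.mp hb]; split_ifs <;> simp

lemma bdryP_congr {α : Bool} {x y : B →₀ ℕ} (h : bdry diff x = bdry diff y) :
    bdryP diff α x = bdryP diff α y := by
  cases α <;> rw [bdryP, bdryP, h]

lemma trunc_dstep {aug : B → ℤ} (hADC : IsADC deg diff aug) (α : Bool)
    {j m : ℕ} (hjm : j < m) (z : B →₀ ℕ) :
    trunc deg j (dstep deg diff α m z) = trunc deg j z := by
  rw [dstep, trunc_add]
  have h1 : trunc deg j (bdryP diff α (homog deg (m + 1) z)) = 0 := by
    refine trunc_eq_zero deg ?_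
    intro b hb
    have := deg_of_mem_bdryP deg diff hADC α m z hb
    omega
  rw [h1, zero_add, trunc_trunc deg (by omega)]

lemma trunc_dmapAux {aug : B → ℤ} (hADC : IsADC deg diff aug) (α : Bool) (k : ℕ) :
    ∀ m, ∀ x : B →₀ ℕ, ∀ j, j < m →
      trunc deg j (dmapAux deg diff α m k x) = trunc deg j x := by
  induction k with
  | zero => intro m x j _; rfl
  | succ k ih =>
    intro m x j hjm
    show trunc deg j (dstep deg diff α m (dmapAux deg diff α (m + 1) k x)) = _
    rw [trunc_dstep deg diff hADC α hjm, ih (m + 1) x j (by omega)]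

lemma degC_dstep {aug : B → ℤ} (hADC : IsADC deg diff aug) (α : Bool)
    {m : ℕ} (z : B →₀ ℕ) :
    degC deg (dstep deg diff α m z) ≤ m := by
  rw [degC_le_iff]
  intro b hb
  have hb' := Finsupp.support_add hb
  rw [Finset.mem_union] at hb'
  rcases hb' with hb' | hb'
  · exact le_of_eq (deg_of_mem_bdryP deg diff hADC α m z hb')
  · exact (support_trunc deg hb').2

lemma degC_dmapAux {aug : B → ℤ} (hADC : IsADC deg diff aug) (α : Bool) (k : ℕ) :
    ∀ m, ∀ x : B →₀ ℕ, degC deg x ≤ m + k →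
      degC deg (dmapAux deg diff α m k x) ≤ m := by
  induction k with
  | zero => intro m x h; exact h
  | succ k ih =>
    intro m x h
    exact degC_dstep deg diff hADC α _

lemma bdry_dmapAux {aug : B → ℤ} (hADC : IsADC deg diff aug) (k : ℕ) :
    ∀ m, ∀ x : B →₀ ℕ, degC deg x ≤ m + k →
      bdry diff (dmapAux deg diff true m k x) =
        bdry diff (dmapAux deg diff false m k x) := by
  induction k with
  | zero => intro m x _; rfl
  | succ k ih =>
    intro m x hx
    set yt := dmapAux deg diff true (m + 1) k x with hyt
    set yf := dmapAux deg diff false (m + 1) k x with hyf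
    have hby : bdry diff yt = bdry diff yf := ih (m + 1) x (by omega)
    have hdt : degC deg yt ≤ m + 1 := degC_dmapAux deg diff hADC true k (m+1) x (by omega)
    have hdf : degC deg yf ≤ m + 1 := degC_dmapAux deg diff hADC false k (m+1) x (by omega)
    have htt : trunc deg m yt = trunc deg m x :=
      trunc_dmapAux deg diff hADC true k (m + 1) x m (by omega)
    have htf : trunc deg m yf = trunc deg m x :=
      trunc_dmapAux deg diff hADC false k (m + 1) x m (by omega)
    have d1 : bdry diff yt =
        bdry diff (homog deg (m + 1) yt) + bdry diff (trunc deg m x) := by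
      conv_lhs => rw [← homog_add_trunc deg hdt]
      rw [bdry_add, htt]
    have d2 : bdry diff yf =
        bdry diff (homog deg (m + 1) yf) + bdry diff (trunc deg m x) := by
      conv_lhs => rw [← homog_add_trunc deg hdf]
      rw [bdry_add, htf]
    rw [d1, d2] at hby
    have hht : bdry diff (homog deg (m + 1) yt) = bdry diff (homog deg (m + 1) yf) :=
      add_right_cancel hby
    show bdry diff (dstep deg diff true m yt) = bdry diff (dstep deg diff false m yf)
    rw [dstep, dstep, bdry_add, bdry_add, htt, htf]
    congr 1
    rw [bdryP_congr diff hht.symm]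
    show bdry diff (posPart (bdry diff (homog deg (m + 1) yt))) =
      bdry diff (negPart (bdry diff (homog deg (m + 1) yt)))
    have e4 : Bh diff (bdry diff (homog deg (m + 1) yt)) = 0 := by
      rw [bdry_eq_Bh diff]; exact Bh_Bh deg diff hADC _
    have e5 := bdry_posPart_sub_negPart diff (bdry diff (homog deg (m + 1) yt))
    rw [e4] at e5
    exact sub_eq_zero.mp e5

lemma dmapAux_add_left (α : Bool) (k : ℕ) :
    ∀ m, ∀ a x : B →₀ ℕ, degC deg a ≤ m →
      dmapAux deg diff α m k (a + x) = a + dmapAux deg diff α m k x := by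
  induction k with
  | zero => intro m a x _; rfl
  | succ k ih =>
    intro m a x ha
    show dstep deg diff α m (dmapAux deg diff α (m + 1) k (a + x)) =
      a + dstep deg diff α m (dmapAux deg diff α (m + 1) k x)
    rw [ih (m + 1) a x (by omega)]
    rw [dstep, dstep, homog_add, trunc_add]
    have h1 : homog deg (m + 1) a = 0 :=
      homog_eq_zero_of_deg_lt deg fun b hb => by
        have := (degC_le_iff deg).mp ha b hb; omega
    have h2 : trunc deg m a = a := trunc_eq_self deg fun b hb => (degC_le_iff deg).mp ha b hb
    rw [h1, h2, zero_add]
    abel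

lemma eq_zero_of_trunc_eq_zero {j : ℕ} {x : B →₀ ℕ} (h : trunc deg j x = 0)
    {b : B} (hb : deg b ≤ j) : x b = 0 := by
  have h2 := DFunLike.congr_fun h b
  rwa [trunc_apply, if_pos hb, Finsupp.coe_zero, Pi.zero_apply] at h2

lemma main_le {aug : B → ℤ} (hADC : IsADC deg diff aug)
    (a c : B →₀ ℕ) (n : ℕ) (hn : n = min (degC deg a) (degC deg c)) (hn1 : 1 ≤ n)
    (hr : trunc deg (n - 1) (a + c) = 0) (hle : degC deg a ≤ degC deg c) (α : Bool) :
    dmap deg diff α (n - 1) (a + c) =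
      csub (dmap deg diff α (n - 1) a) (dmap deg diff (!α) (n - 1) c) +
      csub (dmap deg diff α (n - 1) c) (dmap deg diff (!α) (n - 1) a) := by
  rw [min_eq_left hle] at hn
  set q := degC deg c with hq
  have hpa : degC deg a = n := hn.symm
  have hnq : n ≤ q := hn ▸ hle
  have hm : n - 1 + 1 = n := by omega
  -- support facts
  have hsa : ∀ b ∈ a.support, deg b = n := by
    intro b hb
    have h1 : deg b ≤ n := (degC_le_iff deg).mp (le_of_eq hpa) b hb
    have h2 : ¬ deg b ≤ n - 1 := by
      intro hle2
      have := eq_zero_of_trunc_eq_zero deg hr hle2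
      rw [Finsupp.add_apply] at this
      exact Finsupp.mem_support_iff.mp hb (by omega)
    omega
  have hsc : ∀ b ∈ c.support, n ≤ deg b := by
    intro b hb
    by_contra h2
    have := eq_zero_of_trunc_eq_zero deg hr (b := b) (by omega)
    rw [Finsupp.add_apply] at this
    exact Finsupp.mem_support_iff.mp hb (by omega)
  have htrc : trunc deg (n - 1) c = 0 :=
    trunc_eq_zero deg fun b hb => by have := hsc b hb; omega
  have htra : trunc deg (n - 1) a = 0 :=
    trunc_eq_zero deg fun b hb => by have := hsa b hb; omega
  -- the `n`-level maps of `c`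
  set cA := dmapAux deg diff α n (q - n) c with hcA
  set cN := dmapAux deg diff (!α) n (q - n) c with hcN
  have hbc : bdry diff cA = bdry diff cN := by
    cases α
    · exact (bdry_dmapAux deg diff hADC (q - n) n c (by omega)).symm
    · exact bdry_dmapAux deg diff hADC (q - n) n c (by omega)
  have hdcA : degC deg cA ≤ n := degC_dmapAux deg diff hADC α (q - n) n c (by omega)
  have htcA : trunc deg (n - 1) cA = 0 := by
    rw [hcA, trunc_dmapAux deg diff hADC α (q - n) n c (n - 1) (by omega), htrc]
  have hscA : ∀ b ∈ cA.support, deg b = n := by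
    intro b hb
    have h1 : deg b ≤ n := (degC_le_iff deg).mp hdcA b hb
    have h2 : ¬ deg b ≤ n - 1 := fun hle2 =>
      Finsupp.mem_support_iff.mp hb (eq_zero_of_trunc_eq_zero deg htcA hle2)
    omega
  -- degree of the sum
  have hdsum : degC deg (a + c) = q := by
    apply le_antisymm
    · rw [degC_le_iff]
      intro b hb
      rcases Finset.mem_union.mp (Finsupp.support_add hb) with hb | hb
      · have := hsa b hb; omega
      · exact (degC_le_iff deg).mp le_rfl b hb
    · have hsub : c.support ⊆ (a + c).support := by
        intro b hb
        rw [Finsupp.mem_support_iff, Finsupp.add_apply]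
        have := Finsupp.mem_support_iff.mp hb
        omega
      exact Finset.sup_mono hsub
  -- step computation of dmap on various chains
  have key : ∀ (β : Bool) (z : B →₀ ℕ), (∀ b ∈ z.support, deg b = n) →
      dstep deg diff β (n - 1) z = bdryP diff β z := by
    intro β z hz
    rw [dstep, hm, homog_eq_self deg hz, trunc_eq_zero deg fun b hb => by
      have := hz b hb; omega, add_zero]
  have hLHS : dmap deg diff α (n - 1) (a + c) = bdryP diff α (a + cA) := by
    rw [dmap, hdsum]
    have hk : q - (n - 1) = (q - n) + 1 := by omega
    rw [hk]
    show dstep deg diff α (n - 1) (dmapAux deg diff α (n - 1 + 1) (q - n) (a + c)) = _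
    rw [hm, dmapAux_add_left deg diff α (q - n) n a c (le_of_eq hpa), ← hcA]
    refine key α (a + cA) ?_
    intro b hb
    rcases Finset.mem_union.mp (Finsupp.support_add hb) with hb | hb
    · exact hsa b hb
    · exact hscA b hb
  have hA : ∀ β : Bool, dmap deg diff β (n - 1) a = bdryP diff β a := by
    intro β
    rw [dmap, hpa]
    have hk : n - (n - 1) = 1 := by omega
    rw [hk]
    show dstep deg diff β (n - 1) (dmapAux deg diff β (n - 1 + 1) 0 a) = _
    exact key β a hsa
  have hC : ∀ β : Bool, dmap deg diff β (n - 1) c =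
      bdryP diff β (dmapAux deg diff β n (q - n) c) := by
    intro β
    rw [dmap, ← hq]
    have hk : q - (n - 1) = (q - n) + 1 := by omega
    rw [hk]
    show dstep deg diff β (n - 1) (dmapAux deg diff β (n - 1 + 1) (q - n) c) = _
    rw [hm]
    refine key β _ ?_
    intro b hb
    have h1 : deg b ≤ n :=
      (degC_le_iff deg).mp (degC_dmapAux deg diff hADC β (q - n) n c (by omega)) b hb
    have h2 : ¬ deg b ≤ n - 1 := fun hle2 =>
      Finsupp.mem_support_iff.mp hb (eq_zero_of_trunc_eq_zero deg (by
        rw [trunc_dmapAux deg diff hADC β (q - n) n c (n - 1) (by omega), htrc]) hle2)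
    omega
  rw [hLHS, hA, hA, hC, hC, ← hcA, ← hcN, bdryP_congr diff hbc.symm]
  -- final pointwise identity
  ext b
  have hb : bdry diff (a + cA) b = bdry diff a b + bdry diff cA b := by
    rw [bdry_add, Finsupp.add_apply]
  cases α <;>
  · simp only [bdryP, Bool.not_true, Bool.not_false, if_pos, if_neg, Bool.false_eq_true,
      not_false_iff, if_true, if_false, csub, Chains.posPart, Chains.negPart,
      Finsupp.zipWith_apply, Finsupp.add_apply, Finsupp.mapRange_apply, hb]
    omega

end ChainsAux

open Chains in
/-- Let `K` be an augmented directed complex with loop-free unitary basis, and `a, c`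
chains with `n := min(|a|, |c|) ≥ 1` and `r_{n-1}(a + c) = 0`.  Then for each `α`,
`d^α_{n-1}(a + c) = (d^α_{n-1}(a) ∖ d^{-α}_{n-1}(c)) + (d^α_{n-1}(c) ∖ d^{-α}_{n-1}(a))`. -/
theorem dmap_add_of_trunc_eq_zero {B : Type*} [DecidableEq B]
    (deg : B → ℕ) (diff : B → B →₀ ℤ) (aug : B → ℤ)
    (hADC : IsADC deg diff aug) (hU : Unitary deg diff aug) (hLF : LoopFree deg diff)
    (a c : B →₀ ℕ) (n : ℕ) (hn : n = min (degC deg a) (degC deg c)) (hn1 : 1 ≤ n)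
    (hr : trunc deg (n - 1) (a + c) = 0) (α : Bool) :
    dmap deg diff α (n - 1) (a + c) =
      csub (dmap deg diff α (n - 1) a) (dmap deg diff (!α) (n - 1) c) +
      csub (dmap deg diff α (n - 1) c) (dmap deg diff (!α) (n - 1) a) := by
  rcases le_total (degC deg a) (degC deg c) with h | h
  · exact ChainsAux.main_le deg diff hADC a c n hn hn1 hr h α
  · have h2 := ChainsAux.main_le deg diff hADC c a n (by rw [hn, min_comm]) hn1
      (by rwa [add_comm]) h α
    rw [add_comm c a] at h2
    rw [h2, add_comm]
end

section
/- For any chain a in an augmented directed complex with basis and any entier n ≥ 1: d⁺_{n-1} ∘ d⁺_n (a) = d⁺_{n-1} ∘ d⁻_n (a) and d⁻_{n-1} ∘ d⁺_n (a) = d⁻_{n-1} ∘ d⁻_n (a) (globularity of the chain source/target operators). -/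
namespace Chains

section Globularity

variable {B : Type*} [DecidableEq B] {deg : B → ℕ} {diff : B → B →₀ ℤ} {aug : B → ℤ}

set_option linter.unusedSectionVars false

/-- The differential on integral combinations, as a linear map. -/
noncomputable def bdryL (diff : B → B →₀ ℤ) : (B →₀ ℤ) →ₗ[ℤ] (B →₀ ℤ) :=
  Finsupp.lsum ℤ fun b => LinearMap.toSpanSingleton ℤ _ (diff b)

lemma bdry_eq (a : B →₀ ℕ) : bdry diff a = bdryL diff (toInt a) := by
  simp [bdry, toInt, bdryL, Finsupp.sum_mapRange_index, Finsupp.lsum_apply,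
    LinearMap.toSpanSingleton_apply]

lemma bdryL_diff (b : B) : bdryL diff (diff b) = (diff b).sum fun b' k => k • diff b' := by
  simp only [bdryL, Finsupp.lsum_apply]
  exact Finsupp.sum_congr fun b' _ => rfl

lemma bdryL_bdryL (hADC : IsADC deg diff aug) (x : B →₀ ℤ) :
    bdryL diff (bdryL diff x) = 0 := by
  induction x using Finsupp.induction_linear with
  | zero => simp
  | add f g hf hg => simp [map_add, hf, hg]
  | single b k =>
    have h1 : bdryL diff (Finsupp.single b k) = k • diff b := by
      simp [bdryL, Finsupp.lsum_apply, LinearMap.toSpanSingleton_apply]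
    rw [h1, map_smul, bdryL_diff, hADC.diff_sq b, smul_zero]

lemma toInt_apply (a : B →₀ ℕ) (b : B) : toInt a b = (a b : ℤ) := rfl

lemma toInt_add (a a' : B →₀ ℕ) : toInt (a + a') = toInt a + toInt a' := by
  ext b; simp [toInt_apply]

lemma toInt_pos_sub_neg (z : B →₀ ℤ) : toInt (posPart z) - toInt (negPart z) = z := by
  ext b
  simp only [Finsupp.sub_apply, toInt_apply, posPart, negPart, Finsupp.mapRange_apply]
  omega

lemma homog_apply (k : ℕ) (a : B →₀ ℕ) (b : B) :
    homog deg k a b = if deg b = k then a b else 0 := by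
  classical
  simp [homog, Finsupp.filter_apply]

lemma trunc_apply (k : ℕ) (a : B →₀ ℕ) (b : B) :
    trunc deg k a b = if deg b ≤ k then a b else 0 := by
  classical
  simp [trunc, Finsupp.filter_apply]

lemma apply_eq_zero_of_degC_lt {a : B →₀ ℕ} {b : B} (h : degC deg a < deg b) : a b = 0 := by
  by_contra hb
  have h2 : deg b ≤ degC deg a := Finset.le_sup (Finsupp.mem_support_iff.mpr hb)
  omega

lemma homog_eq_zero_of_degC_lt {a : B →₀ ℕ} {k : ℕ} (h : degC deg a < k) :
    homog deg k a = 0 := by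
  ext b
  rw [homog_apply]
  by_cases hb : deg b = k
  · rw [if_pos hb]
    refine apply_eq_zero_of_degC_lt (deg := deg) ?_
    omega
  · rw [if_neg hb]; rfl

lemma bdryP_zero (α : Bool) : bdryP diff α (0 : B →₀ ℕ) = 0 := by
  have h : bdry diff (0 : B →₀ ℕ) = 0 := by simp [bdry]
  cases α <;> simp [bdryP, h, posPart, negPart]

lemma deg_eq_of_mem_bdryP (hADC : IsADC deg diff aug) (α : Bool) (n : ℕ) (x : B →₀ ℕ)
    {b' : B} (hb' : b' ∈ (bdryP diff α (homog deg (n + 1) x)).support) : deg b' = n := by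
  have h1 : b' ∈ (bdry diff (homog deg (n + 1) x)).support := by
    cases α
    · have e : bdryP diff false (homog deg (n + 1) x) =
          negPart (bdry diff (homog deg (n + 1) x)) := rfl
      rw [e, negPart] at hb'
      exact Finsupp.support_mapRange hb'
    · have e : bdryP diff true (homog deg (n + 1) x) =
          posPart (bdry diff (homog deg (n + 1) x)) := rfl
      rw [e, posPart] at hb'
      exact Finsupp.support_mapRange hb'
  have h2 := Finsupp.support_sum h1
  obtain ⟨b, hb, hb'2⟩ := Finset.mem_biUnion.mp h2
  have hdb : deg b = n + 1 := by
    have hv := Finsupp.mem_support_iff.mp hb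
    rw [homog_apply] at hv
    by_contra h; simp [h] at hv
  have hb'3 : b' ∈ (diff b).support := Finsupp.support_smul hb'2
  have := hADC.diff_deg b b' hb'3
  omega

lemma degC_dstep (hADC : IsADC deg diff aug) (α : Bool) (n : ℕ) (x : B →₀ ℕ) :
    degC deg (dstep deg diff α n x) ≤ n := by
  refine Finset.sup_le fun b hb => ?_
  rcases Finset.mem_union.mp (Finsupp.support_add hb) with h | h
  · exact le_of_eq (deg_eq_of_mem_bdryP hADC α n x h)
  · have h2 := Finsupp.mem_support_iff.mp h
    rw [trunc_apply] at h2
    by_contra hc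
    rw [if_neg (by omega)] at h2
    exact h2 rfl

lemma trunc_eq_self {a : B →₀ ℕ} {n : ℕ} (h : degC deg a ≤ n) : trunc deg n a = a := by
  ext b
  rw [trunc_apply]
  by_cases hb : deg b ≤ n
  · rw [if_pos hb]
  · rw [if_neg hb]
    refine (apply_eq_zero_of_degC_lt (deg := deg) ?_).symm
    omega

lemma dstep_self {α : Bool} {n : ℕ} {a : B →₀ ℕ} (h : degC deg a ≤ n) :
    dstep deg diff α n a = a := by
  rw [dstep, homog_eq_zero_of_degC_lt (by omega), bdryP_zero, trunc_eq_self h, zero_add]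

lemma dstep_apply_of_lt (hADC : IsADC deg diff aug) {α : Bool} {n : ℕ} {b : B}
    (hb : deg b < n) (x : B →₀ ℕ) : dstep deg diff α n x b = x b := by
  obtain ⟨m, rfl⟩ : ∃ m, n = m + 1 := ⟨n - 1, by omega⟩
  rw [dstep, Finsupp.add_apply, trunc_apply, if_pos (by omega)]
  have h0 : bdryP diff α (homog deg (m + 1 + 1) x) b = 0 := by
    rw [← Finsupp.notMem_support_iff]
    intro hmem
    have := deg_eq_of_mem_bdryP hADC α (m + 1) x hmem
    omega
  rw [h0, zero_add]

lemma dmapAux_self {α : Bool} (k : ℕ) :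
    ∀ n (a : B →₀ ℕ), degC deg a ≤ n → dmapAux deg diff α n k a = a := by
  induction k with
  | zero => intro n a _; rfl
  | succ k ih =>
    intro n a h
    show dstep deg diff α n (dmapAux deg diff α (n + 1) k a) = a
    rw [ih (n + 1) a (by omega), dstep_self h]

lemma dmapAux_apply_of_lt (hADC : IsADC deg diff aug) {α : Bool} {b : B} (k : ℕ) :
    ∀ n (a : B →₀ ℕ), deg b < n → dmapAux deg diff α n k a b = a b := by
  induction k with
  | zero => intro n a _; rfl
  | succ k ih =>
    intro n a h
    show dstep deg diff α n (dmapAux deg diff α (n + 1) k a) b = a b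
    rw [dstep_apply_of_lt hADC h, ih (n + 1) a (by omega)]

lemma dmap_self {α : Bool} {n : ℕ} {a : B →₀ ℕ} (h : degC deg a ≤ n) :
    dmap deg diff α n a = a := by
  rw [dmap]
  exact dmapAux_self _ _ _ h

lemma dmap_apply_of_lt (hADC : IsADC deg diff aug) {α : Bool} {n : ℕ} {b : B}
    (hb : deg b < n) (a : B →₀ ℕ) : dmap deg diff α n a b = a b := by
  rw [dmap]
  exact dmapAux_apply_of_lt hADC _ _ _ hb

lemma dmap_unfold (α : Bool) (n : ℕ) (a : B →₀ ℕ) :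
    dmap deg diff α n a = dstep deg diff α n (dmap deg diff α (n + 1) a) := by
  rcases le_or_gt (degC deg a) n with h | h
  · rw [dmap_self h, dmap_self (h.trans (by omega)), dstep_self h]
  · have h1 : degC deg a - n = (degC deg a - (n + 1)) + 1 := by omega
    rw [dmap, h1, dmap]
    rfl

lemma degC_dmap (hADC : IsADC deg diff aug) (α : Bool) (n : ℕ) (a : B →₀ ℕ) :
    degC deg (dmap deg diff α n a) ≤ n := by
  rcases le_or_gt (degC deg a) n with h | h
  · rw [dmap_self h]; exact h
  · rw [dmap_unfold]; exact degC_dstep hADC α n _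

/-- `t^α_n(a) := (d^α_n a)_n`, the top part of the source/target operator. -/
noncomputable def tmap (deg : B → ℕ) (diff : B → B →₀ ℤ) (α : Bool) (n : ℕ)
    (a : B →₀ ℕ) : B →₀ ℕ :=
  homog deg n (dmap deg diff α n a)

lemma tmap_eq {α : Bool} {n : ℕ} {a : B →₀ ℕ} (h : degC deg a ≤ n) :
    tmap deg diff α n a = homog deg n a := by
  rw [tmap, dmap_self h]

lemma tmap_rec (hADC : IsADC deg diff aug) (α : Bool) (n : ℕ) (a : B →₀ ℕ) :
    tmap deg diff α n a = bdryP diff α (tmap deg diff α (n + 1) a) + homog deg n a := by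
  ext b
  rw [tmap, dmap_unfold, homog_apply, Finsupp.add_apply, homog_apply]
  by_cases hb : deg b = n
  · rw [if_pos hb, if_pos hb, dstep, Finsupp.add_apply, trunc_apply, if_pos (le_of_eq hb),
      dmap_apply_of_lt hADC (by omega), tmap]
  · rw [if_neg hb, if_neg hb, add_zero, eq_comm, ← Finsupp.notMem_support_iff]
    intro hmem
    exact hb (deg_eq_of_mem_bdryP hADC α n _ hmem)

lemma bdryL_tmap (hADC : IsADC deg diff aug) (a : B →₀ ℕ) (k : ℕ) :
    ∀ n, degC deg a ≤ n + k →
      bdryL diff (toInt (tmap deg diff true n a)) =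
        bdryL diff (toInt (tmap deg diff false n a)) := by
  induction k with
  | zero =>
    intro n h
    rw [tmap_eq (show degC deg a ≤ n by omega), tmap_eq (show degC deg a ≤ n by omega)]
  | succ k ih =>
    intro n h
    have ihn := ih (n + 1) (by omega)
    have hsub : toInt (tmap deg diff true n a) - toInt (tmap deg diff false n a) =
        bdryL diff (toInt (tmap deg diff true (n + 1) a)) := by
      rw [tmap_rec hADC true n a, tmap_rec hADC false n a, toInt_add, toInt_add,
        add_sub_add_right_eq_sub]
      have ht : bdryP diff true (tmap deg diff true (n + 1) a) =
          posPart (bdryL diff (toInt (tmap deg diff true (n + 1) a))) := by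
        simp [bdryP, bdry_eq]
      have hf : bdryP diff false (tmap deg diff false (n + 1) a) =
          negPart (bdryL diff (toInt (tmap deg diff true (n + 1) a))) := by
        simp [bdryP, bdry_eq, ihn]
      rw [ht, hf, toInt_pos_sub_neg]
    have h2 := congrArg (bdryL diff) hsub
    rw [map_sub, bdryL_bdryL hADC, sub_eq_zero] at h2
    exact h2

end Globularity

end Chains

open Chains in
/-- Globularity of the chain source/target operators: for any chain `a` in an augmented
directed complex with basis and any `n ≥ 1` (here written `n + 1`),
`d⁺ₙ ∘ d⁺_{n+1} = d⁺ₙ ∘ d⁻_{n+1}` and `d⁻ₙ ∘ d⁺_{n+1} = d⁻ₙ ∘ d⁻_{n+1}`. -/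
theorem dmap_globularity {B : Type*} [DecidableEq B]
    (deg : B → ℕ) (diff : B → B →₀ ℤ) (aug : B → ℤ) (hADC : IsADC deg diff aug)
    (a : B →₀ ℕ) (n : ℕ) :
    dmap deg diff true n (dmap deg diff true (n + 1) a) =
      dmap deg diff true n (dmap deg diff false (n + 1) a) ∧
    dmap deg diff false n (dmap deg diff true (n + 1) a) =
      dmap deg diff false n (dmap deg diff false (n + 1) a) := by
  have key : ∀ α β : Bool, dmap deg diff α n (dmap deg diff β (n + 1) a) =
      bdryP diff α (tmap deg diff β (n + 1) a) + trunc deg n a := by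
    intro α β
    have hc : degC deg (dmap deg diff β (n + 1) a) ≤ n + 1 := degC_dmap hADC β (n + 1) a
    rw [dmap_unfold, dmap_self hc, dstep]
    congr 1
    ext b
    rw [trunc_apply, trunc_apply]
    split
    · exact dmap_apply_of_lt hADC (by omega) a
    · rfl
  have hb : ∀ α : Bool, bdryP diff α (tmap deg diff true (n + 1) a) =
      bdryP diff α (tmap deg diff false (n + 1) a) := by
    intro α
    have h := bdryL_tmap hADC a (degC deg a) (n + 1) (by omega)
    cases α <;> simp [bdryP, bdry_eq, h]
  exact ⟨by rw [key, key, hb], by rw [key, key, hb]⟩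
end

section
/- A nonzero coherent chain of composition degree −1 (i.e., whose support is empty or a singleton, equivalently has at most one element of each degree with at most one element total above the lowest) is a single basis element: if a is a coherent chain with |a|_c = −1 then a = b for some basis element b. -/
/-! If `y` has maximal degree in the support of `a`, composition degree `-1` forces every
other basis element of the support into degree `0`, so `a = (a y)⟨y⟩ + c` with `c` of
degree `0`. The target operator `d⁺₀` is not additive, but it commutes with multiples and
passes degree-`0` summands through unchanged; unitarity gives `e⟨y⟩ = 1` and `aug = 1` in
degree `0`. Hence `1 = e(a) = a y + Σ c`, a sum of naturals with `a y ≥ 1`, so `a = ⟨y⟩`. -/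

theorem Int.toNat_natCast_mul (m : ℕ) (k : ℤ) : ((m : ℤ) * k).toNat = m * k.toNat := by
  rcases le_or_gt 0 k with hk | hk
  · lift k to ℕ using hk
    norm_cast
  · rw [Int.toNat_of_nonpos (mul_nonpos_of_nonneg_of_nonpos m.cast_nonneg hk.le),
      Int.toNat_of_nonpos hk.le, mul_zero]

namespace Chains

variable {B : Type*} {deg : B → ℕ} {diff : B → B →₀ ℤ} {aug : B → ℤ}

lemma posPart_nsmul (m : ℕ) (x : B →₀ ℤ) : posPart (m • x) = m • posPart x := by
  ext b
  simp [posPart, Int.toNat_natCast_mul]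

lemma negPart_nsmul (m : ℕ) (x : B →₀ ℤ) : negPart (m • x) = m • negPart x := by
  ext b
  simp [negPart, ← mul_neg, Int.toNat_natCast_mul]

lemma bdry_nsmul (m : ℕ) (a : B →₀ ℕ) : bdry diff (m • a) = m • bdry diff a := by
  rw [bdry, bdry, Finsupp.sum_smul_index' (by simp), Finsupp.smul_sum]
  exact Finsupp.sum_congr fun b _ => by
    rw [smul_eq_mul, Nat.cast_mul, mul_smul, Nat.cast_smul_eq_nsmul]

lemma bdryP_nsmul (α : Bool) (m : ℕ) (a : B →₀ ℕ) :
    bdryP diff α (m • a) = m • bdryP diff α a := by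
  cases α <;> simp [bdryP, bdry_nsmul, posPart_nsmul, negPart_nsmul]

lemma degC_nsmul {m : ℕ} (hm : m ≠ 0) (a : B →₀ ℕ) : degC deg (m • a) = degC deg a := by
  rw [degC, degC, Finsupp.support_smul_eq hm]

lemma deg_eq_zero_of_degC_eq_zero {c : B →₀ ℕ} (hc : degC deg c = 0) {b : B}
    (hb : b ∈ c.support) : deg b = 0 :=
  (Finset.sup_eq_bot_iff _ _).1 hc b hb

lemma degC_add_of_degC_eq_zero (x : B →₀ ℕ) {c : B →₀ ℕ} (hc : degC deg c = 0) :
    degC deg (x + c) = degC deg x := by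
  classical
  rw [degC, Finsupp.support_add_eq_union, Finset.sup_union]
  change max (degC deg x) (degC deg c) = degC deg x
  rw [hc, max_eq_left (Nat.zero_le _)]

lemma augC_add (x y : B →₀ ℕ) : augC aug (x + y) = augC aug x + augC aug y :=
  Finsupp.sum_add_index' (by simp) fun b k k' => by push_cast; ring

lemma augC_nsmul (m : ℕ) (a : B →₀ ℕ) : augC aug (m • a) = m * augC aug a := by
  rw [augC, augC, Finsupp.sum_smul_index' (by simp), Finsupp.mul_sum]
  exact Finsupp.sum_congr fun b _ => by rw [smul_eq_mul]; push_cast; ring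

lemma deg_eq_zero_of_compDeg_eq_neg_one {a : B →₀ ℕ} (h : compDeg deg a = -1) {b b' : B}
    (hb : b ∈ a.support) (hb' : b' ∈ a.support) (hne : b ≠ b') (hle : deg b' ≤ deg b) :
    deg b' = 0 := by
  by_contra h0
  rw [compDeg] at h
  have hbdd : BddAbove (insert (-1 : ℤ) {n : ℤ | ∃ b ∈ a.support, ∃ b' ∈ a.support,
      b ≠ b' ∧ (deg b' : ℤ) ≤ (deg b : ℤ) ∧ n < (deg b' : ℤ)}) := by
    refine ⟨degC deg a, ?_⟩
    rintro z (rfl | ⟨x, -, x', hx', -, -, hz⟩)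
    · omega
    · have : deg x' ≤ degC deg a := Finset.le_sup hx'
      omega
  have := h ▸ le_csSup hbdd (Set.mem_insert_of_mem _
    ⟨b, hb, b', hb', hne, Int.ofNat_le.2 hle, Int.natCast_pos.2 (Nat.pos_of_ne_zero h0)⟩)
  omega

variable [DecidableEq B]

lemma exists_degC_erase_eq_zero_of_compDeg_eq_neg_one {a : B →₀ ℕ} (ha : a ≠ 0)
    (h : compDeg deg a = -1) : ∃ y ∈ a.support, degC deg (a.erase y) = 0 := by
  obtain ⟨y, hy, hmax⟩ := a.support.exists_max_image deg (Finsupp.support_nonempty_iff.2 ha)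
  refine ⟨y, hy, (Finset.sup_eq_bot_iff _ _).2 fun b hb => ?_⟩
  rw [Finsupp.support_erase, Finset.mem_erase] at hb
  exact deg_eq_zero_of_compDeg_eq_neg_one h hy hb.2 (Ne.symm hb.1) (hmax b hb.2)

lemma dmap_of_degC_le (α : Bool) {n : ℕ} {a : B →₀ ℕ} (h : degC deg a ≤ n) :
    dmap deg diff α n a = a := by
  rw [dmap, Nat.sub_eq_zero_of_le h]
  rfl

lemma dstep_nsmul (α : Bool) (n m : ℕ) (a : B →₀ ℕ) :
    dstep deg diff α n (m • a) = m • dstep deg diff α n a := by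
  rw [dstep, dstep, homog, homog, trunc, trunc, Finsupp.filter_smul, Finsupp.filter_smul,
    bdryP_nsmul, smul_add]

lemma dmapAux_nsmul (α : Bool) (m k n : ℕ) (a : B →₀ ℕ) :
    dmapAux deg diff α n k (m • a) = m • dmapAux deg diff α n k a := by
  induction k generalizing n with
  | zero => rfl
  | succ k ih => simp only [dmapAux, ih, dstep_nsmul]

lemma dstep_add_of_degC_eq_zero (α : Bool) (n : ℕ) (x : B →₀ ℕ) {c : B →₀ ℕ}
    (hc : degC deg c = 0) : dstep deg diff α n (x + c) = dstep deg diff α n x + c := by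
  have hhomog : homog deg (n + 1) c = 0 :=
    (Finsupp.filter_eq_zero_iff _ _).2 fun b hb => Finsupp.notMem_support_iff.1 fun hbc => by
      have := deg_eq_zero_of_degC_eq_zero hc hbc
      omega
  have htrunc : trunc deg n c = c :=
    (Finsupp.filter_eq_self_iff _ _).2 fun b hbc => by
      rw [deg_eq_zero_of_degC_eq_zero hc (Finsupp.mem_support_iff.2 hbc)]
      exact Nat.zero_le n
  simp only [dstep, homog, trunc, Finsupp.filter_add] at hhomog htrunc ⊢
  rw [hhomog, htrunc, add_zero, add_assoc]

lemma dmapAux_add_of_degC_eq_zero (α : Bool) (k n : ℕ) (x : B →₀ ℕ) {c : B →₀ ℕ}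
    (hc : degC deg c = 0) :
    dmapAux deg diff α n k (x + c) = dmapAux deg diff α n k x + c := by
  induction k generalizing n with
  | zero => rfl
  | succ k ih => simp only [dmapAux, ih, dstep_add_of_degC_eq_zero α n _ hc]

lemma eC_nsmul (m : ℕ) (a : B →₀ ℕ) : eC deg diff aug (m • a) = m * eC deg diff aug a := by
  rcases eq_or_ne m 0 with rfl | hm
  · simp [eC, dmap, degC, dmapAux, augC]
  · rw [eC, eC, dmap, dmap, degC_nsmul hm, dmapAux_nsmul, augC_nsmul]

lemma eC_add_of_degC_eq_zero (x : B →₀ ℕ) {c : B →₀ ℕ} (hc : degC deg c = 0) :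
    eC deg diff aug (x + c) = eC deg diff aug x + augC aug c := by
  rw [eC, eC, dmap, dmap, degC_add_of_degC_eq_zero x hc, dmapAux_add_of_degC_eq_zero _ _ _ _ hc,
    augC_add]

lemma eC_single (hU : Unitary deg diff aug) (b : B) (k : ℕ) :
    eC deg diff aug (Finsupp.single b k) = k := by
  rw [← Finsupp.smul_single_one, eC_nsmul, eC, hU b true, mul_one]

lemma aug_eq_one_of_deg_eq_zero (hU : Unitary deg diff aug) {b : B} (hb : deg b = 0) :
    aug b = 1 := by
  have hdeg : degC deg (Finsupp.single b 1) ≤ 0 := by simp [degC, hb]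
  have h := hU b true
  rwa [dmap_of_degC_le true hdeg, augC, Finsupp.sum_single_index (by simp),
    Nat.cast_one, one_mul] at h

lemma augC_of_degC_eq_zero (hU : Unitary deg diff aug) {c : B →₀ ℕ}
    (hc : degC deg c = 0) : augC aug c = c.degree := by
  rw [augC, Finsupp.degree_apply, Nat.cast_sum, Finsupp.sum]
  exact Finset.sum_congr rfl fun b hb => by
    rw [aug_eq_one_of_deg_eq_zero hU (deg_eq_zero_of_degC_eq_zero hc hb), mul_one]

end Chains

open Chains in
theorem coherent_compDeg_neg_one_is_single_general {B : Type*} [DecidableEq B]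
    (deg : B → ℕ) (diff : B → B →₀ ℤ) (aug : B → ℤ)
    (hU : Unitary deg diff aug)
    (a : B →₀ ℕ) (ha : a ≠ 0) (hcoh : Coherent deg diff aug a)
    (hcd : compDeg deg a = -1) :
    ∃ b : B, a = Finsupp.single b 1 := by
  obtain ⟨y, hy, hrest⟩ := exists_degC_erase_eq_zero_of_compDeg_eq_neg_one ha hcd
  have hsplit := Finsupp.single_add_erase y a
  have he : eC deg diff aug a = a y + (a.erase y).degree := by
    conv_lhs => rw [← hsplit]
    rw [eC_add_of_degC_eq_zero _ hrest, eC_single hU, augC_of_degC_eq_zero hU hrest]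
  rw [Coherent, he] at hcoh
  have hy1 : a y = 1 := by
    have := Finsupp.mem_support_iff.1 hy
    omega
  have hrest0 : (a.erase y).degree = 0 := by omega
  rw [Finsupp.degree_eq_zero_iff] at hrest0
  exact ⟨y, by rw [← hsplit, hy1, hrest0, add_zero]⟩

open Chains in
/-- A nonzero coherent chain of composition degree `-1` in an augmented directed complex
with loop-free unitary basis is a single basis element. -/
theorem coherent_compDeg_neg_one_is_single {B : Type*} [DecidableEq B]
    (deg : B → ℕ) (diff : B → B →₀ ℤ) (aug : B → ℤ)
    (hADC : IsADC deg diff aug) (hU : Unitary deg diff aug) (hLF : LoopFree deg diff)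
    (a : B →₀ ℕ) (ha : a ≠ 0) (hcoh : Coherent deg diff aug a)
    (hcd : compDeg deg a = -1) :
    ∃ b : B, a = Finsupp.single b 1 :=
  coherent_compDeg_neg_one_is_single_general deg diff aug hU a ha hcoh hcd
end
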